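/- arXiv:2505.08954 — 7 statements merged into one kernel-verified Lean document; each statement's English description precedes it below -/
import Mathlib

section
/- Let F be a probability distribution on ℝ with right-unbounded support, and let g : ℝ → ℝ be a non-negative nondecreasing function with g(x) → ∞ as x → ∞. Then there exist probability distributions H₁ and H₂ on ℝ such that, for independent random variables ξ₁ with distribution H₁ and ξ₂ with distribution H₂, the random variable min(ξ₁, ξ₂) has distribution F, and E g(ξ₁) = E g(ξ₂) = ∞. -/
/-!
Write the tail of `F` as `1 - F x = exp (-Λ x)`, where `Λ = -log (1 - F)` is the cumulative
hazard; it is finite because the support of `F` is unbounded on the right. Cut `[0, ∞)` into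
consecutive blocks `[c₀, c₁), [c₁, c₂), …` and let `ψ₁ t` and `ψ₂ t` be the Lebesgue measure of
the part of `[0, t]` covered by the even, respectively odd, blocks. Since `ψ₁ + ψ₂ = id` on
`[0, ∞)`, the tails `exp (-ψᵢ (Λ x))` multiply to the tail of `F`, so the minimum of independent
variables with these tails has law `F`. While `Λ` crosses an odd block, `ψ₁` does not grow, so
the tail of `ξ₁` stays above `exp (-c_{2n+1})` up to a point `y` with `Λ y ≤ c_{2n+2}`; choosing
the blocks so that `g y ≥ (2n+1) exp c_{2n+1}` there forces `E g(ξ₁) ≥ 2n+1` for every `n`.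
The even blocks do the same for `ξ₂`.
-/

open MeasureTheory ProbabilityTheory Filter Set Real Topology
open scoped ENNReal

section OccupationTime

noncomputable def occupationTime (E : Set ℝ) (t : ℝ) : ℝ := volume.real (Icc 0 t ∩ E)

variable {E : Set ℝ} {a b s t : ℝ}

lemma volume_Icc_inter_ne_top (E : Set ℝ) (t : ℝ) : volume (Icc 0 t ∩ E) ≠ ∞ :=
  measure_ne_top_of_subset inter_subset_left (by simp [Real.volume_Icc])

lemma occupationTime_nonneg : 0 ≤ occupationTime E t := measureReal_nonneg

lemma occupationTime_zero : occupationTime E 0 = 0 :=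
  measureReal_mono_null (inter_subset_left.trans (Icc_self 0).subset) (by simp [Measure.real])
    (by simp)

lemma monotone_occupationTime : Monotone (occupationTime E) := fun _ _ h =>
  measureReal_mono (inter_subset_inter_left _ (Icc_subset_Icc_right h))
    (volume_Icc_inter_ne_top E _)

lemma occupationTime_le_add_sub (hst : s ≤ t) :
    occupationTime E t ≤ occupationTime E s + (t - s) := by
  have hsub : Icc 0 t ∩ E ⊆ (Icc 0 s ∩ E) ∪ Icc s t := by
    rintro x ⟨⟨hx0, hxt⟩, hxE⟩
    rcases le_or_gt x s with h | h
    exacts [Or.inl ⟨⟨hx0, h⟩, hxE⟩, Or.inr ⟨h.le, hxt⟩]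
  calc occupationTime E t ≤ volume.real ((Icc 0 s ∩ E) ∪ Icc s t) :=
        measureReal_mono hsub (measure_union_ne_top (volume_Icc_inter_ne_top E s) (by simp))
    _ ≤ occupationTime E s + volume.real (Icc s t) := measureReal_union_le _ _
    _ = occupationTime E s + (t - s) := by rw [Real.volume_real_Icc_of_le hst]

lemma continuous_occupationTime : Continuous (occupationTime E) := by
  refine (LipschitzWith.of_le_add fun s t => ?_).continuous
  rcases le_total s t with h | h
  · linarith [monotone_occupationTime (E := E) h, dist_nonneg (x := s) (y := t)]
  · rw [Real.dist_eq, abs_of_nonneg (sub_nonneg.2 h)]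
    exact occupationTime_le_add_sub h

lemma occupationTime_add_sub_le (ha : 0 ≤ a) (hab : a ≤ b) (hE : Ioo a b ⊆ E) :
    occupationTime E a + (b - a) ≤ occupationTime E b := by
  have hdisj : Disjoint (Icc 0 a ∩ E) (Ioo a b) :=
    Set.disjoint_left.2 fun x hx hx' => hx'.1.not_ge hx.1.2
  have hsub : (Icc 0 a ∩ E) ∪ Ioo a b ⊆ Icc 0 b ∩ E := by
    rintro x (⟨⟨hx0, hxa⟩, hxE⟩ | hx)
    exacts [⟨⟨hx0, hxa.trans hab⟩, hxE⟩, ⟨⟨ha.trans hx.1.le, hx.2.le⟩, hE hx⟩]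
  calc occupationTime E a + (b - a) = volume.real ((Icc 0 a ∩ E) ∪ Ioo a b) := by
        rw [measureReal_union hdisj measurableSet_Ioo (volume_Icc_inter_ne_top E a) (by simp),
          Real.volume_real_Ioo_of_le hab, occupationTime]
    _ ≤ occupationTime E b := measureReal_mono hsub (volume_Icc_inter_ne_top E b)

lemma occupationTime_le_of_disjoint (ha : 0 ≤ a) (hE : Disjoint E (Ioo a b)) (ht : t ≤ b) :
    occupationTime E t ≤ a := by
  have hsub : Icc 0 t ∩ E ⊆ Icc 0 a ∪ {b} := by
    rintro x ⟨⟨hx0, hxt⟩, hxE⟩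
    by_contra hx
    simp only [mem_union, mem_Icc, mem_singleton_iff, not_or, not_and, not_le] at hx
    exact Set.disjoint_left.1 hE hxE ⟨hx.1 hx0, (hxt.trans ht).lt_of_ne hx.2⟩
  calc occupationTime E t ≤ volume.real (Icc 0 a ∪ {b}) :=
        measureReal_mono hsub (measure_union_ne_top (by simp [Real.volume_Icc]) (by simp))
    _ ≤ volume.real (Icc 0 a) + volume.real {b} := measureReal_union_le _ _
    _ = a := by simp [Measure.real, ha]

lemma occupationTime_add_occupationTime_compl (hE : MeasurableSet E) (ht : 0 ≤ t) :
    occupationTime E t + occupationTime Eᶜ t = t := by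
  rw [occupationTime, occupationTime, ← sdiff_eq, measureReal_inter_add_sdiff hE (by simp),
    Real.volume_real_Icc_of_le ht, sub_zero]

lemma tendsto_occupationTime_atTop {d : ℕ → ℝ} (hd0 : 0 ≤ d 0) (hd : ∀ k, d k + 1 ≤ d (k + 1))
    (hE : ∀ j, Ioo (d (2 * j)) (d (2 * j + 1)) ⊆ E) :
    Tendsto (occupationTime E) atTop atTop := by
  have hd_mono : Monotone d := monotone_nat_of_le_succ fun k => by linarith [hd k]
  have hd_nonneg : ∀ k, 0 ≤ d k := fun k => hd0.trans (hd_mono k.zero_le)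
  have key : ∀ j : ℕ, (j : ℝ) ≤ occupationTime E (d (2 * j)) := by
    intro j
    induction j with
    | zero => simpa using occupationTime_nonneg
    | succ j ih =>
      calc ((j + 1 : ℕ) : ℝ) ≤ occupationTime E (d (2 * j)) + (d (2 * j + 1) - d (2 * j)) := by
            push_cast; linarith [hd (2 * j)]
        _ ≤ occupationTime E (d (2 * j + 1)) :=
            occupationTime_add_sub_le (hd_nonneg _) (hd_mono (by omega)) (hE j)
        _ ≤ occupationTime E (d (2 * (j + 1))) := monotone_occupationTime (hd_mono (by omega))
  exact tendsto_atTop_atTop_of_monotone monotone_occupationTime fun b =>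
    ⟨d (2 * ⌈b⌉₊), (Nat.le_ceil b).trans (key _)⟩

lemma le_mul_exp_neg_occupationTime {k : ℕ} {G : ℝ} (ha : 0 ≤ a) (hE : Disjoint E (Ioo a b))
    (ht : t ≤ b) (hG : k * exp a ≤ G) : (k : ℝ) ≤ G * exp (-occupationTime E t) :=
  calc (k : ℝ) = k * exp a * exp (-a) := by
        rw [mul_assoc, ← exp_add, add_neg_cancel, exp_zero, mul_one]
    _ ≤ G * exp (-occupationTime E t) :=
      mul_le_mul hG (exp_le_exp.2 (neg_le_neg (occupationTime_le_of_disjoint ha hE ht)))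
        (exp_pos _).le ((mul_nonneg k.cast_nonneg (exp_pos a).le).trans hG)

end OccupationTime

section EvenBlocks

noncomputable def evenBlocks (c : ℕ → ℝ) : Set ℝ := ⋃ j : ℕ, Ico (c (2 * j)) (c (2 * j + 1))

variable {c : ℕ → ℝ}

lemma measurableSet_evenBlocks (c : ℕ → ℝ) : MeasurableSet (evenBlocks c) :=
  .iUnion fun _ => measurableSet_Ico

lemma Ioo_subset_evenBlocks (c : ℕ → ℝ) (j : ℕ) : Ioo (c (2 * j)) (c (2 * j + 1)) ⊆ evenBlocks c :=
  fun _ hx => mem_iUnion.2 ⟨j, Ioo_subset_Ico_self hx⟩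

lemma disjoint_evenBlocks_Ioo (hc : Monotone c) (j : ℕ) :
    Disjoint (evenBlocks c) (Ioo (c (2 * j + 1)) (c (2 * j + 2))) := by
  refine disjoint_iUnion_left.2 fun i => Set.disjoint_left.2 fun x hx hx' => ?_
  rcases le_or_gt i j with h | h
  · exact (hx.2.trans_le (hc (by omega))).not_gt hx'.1
  · exact (hx'.2.trans_le (hc (by omega))).not_ge hx.1

variable (hc0 : 0 ≤ c 0) (hc : ∀ k, c k + 1 ≤ c (k + 1))
include hc0 hc

lemma tendsto_occupationTime_evenBlocks : Tendsto (occupationTime (evenBlocks c)) atTop atTop :=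
  tendsto_occupationTime_atTop hc0 hc (Ioo_subset_evenBlocks c)

lemma tendsto_occupationTime_compl_evenBlocks :
    Tendsto (occupationTime (evenBlocks c)ᶜ) atTop atTop := by
  have hc_mono : Monotone c := monotone_nat_of_le_succ fun k => by linarith [hc k]
  exact tendsto_occupationTime_atTop (d := fun k => c (k + 1)) (hc0.trans (hc_mono (Nat.zero_le 1)))
    (fun k => hc (k + 1)) fun j => (disjoint_evenBlocks_Ioo hc_mono j).subset_compl_left

end EvenBlocks

namespace ProbabilityTheory

noncomputable def cumHazard (F : Measure ℝ) (x : ℝ) : ℝ := -log (1 - cdf F x)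

variable (F : Measure ℝ)

lemma cdf_lt_one [IsProbabilityMeasure F] {x : ℝ} (hx : F (Iic x) < 1) : cdf F x < 1 := by
  rw [cdf_eq_real, measureReal_def]
  exact ENNReal.toReal_lt_of_lt_ofReal (by simpa using hx)

lemma cumHazard_nonneg (x : ℝ) : 0 ≤ cumHazard F x :=
  neg_nonneg.2 (log_nonpos (by linarith [cdf_le_one F x]) (by linarith [cdf_nonneg F x]))

lemma exp_neg_cumHazard {x : ℝ} (hx : cdf F x < 1) : exp (-cumHazard F x) = 1 - cdf F x := by
  rw [cumHazard, neg_neg, exp_log (sub_pos.2 hx)]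

lemma measureReal_Ioi_eq_exp_neg_cumHazard [IsProbabilityMeasure F] {x : ℝ} (hx : cdf F x < 1) :
    F.real (Ioi x) = exp (-cumHazard F x) := by
  rw [exp_neg_cumHazard F hx, ← compl_Iic, probReal_compl_eq_one_sub measurableSet_Iic,
    cdf_eq_real]

variable {F}

lemma monotone_cumHazard (hF : ∀ x, cdf F x < 1) : Monotone (cumHazard F) := fun _ y h =>
  neg_le_neg (log_le_log (sub_pos.2 (hF y)) (sub_le_sub_left (monotone_cdf F h) 1))

lemma continuousWithinAt_cumHazard {x : ℝ} (hx : cdf F x < 1) :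
    ContinuousWithinAt (cumHazard F) (Ici x) x :=
  ((continuousAt_const.sub continuousAt_id).log (sub_pos.2 hx).ne').neg.comp_continuousWithinAt
    ((cdf F).right_continuous x)

lemma tendsto_cumHazard_atBot : Tendsto (cumHazard F) atBot (𝓝 0) := by
  have hcont : ContinuousAt (fun p : ℝ => -log (1 - p)) 0 := by fun_prop (disch := norm_num)
  have := hcont.tendsto.comp (tendsto_cdf_atBot F)
  rwa [sub_zero, log_one, neg_zero] at this

lemma tendsto_cumHazard_atTop (hF : ∀ x, cdf F x < 1) : Tendsto (cumHazard F) atTop atTop := by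
  have hsurv : Tendsto (fun x => 1 - cdf F x) atTop (𝓝[>] 0) :=
    tendsto_nhdsWithin_of_tendsto_nhds_of_eventually_within _
      (by simpa using (tendsto_cdf_atTop F).const_sub 1)
      (.of_forall fun x => sub_pos.2 (hF x))
  exact tendsto_neg_atBot_atTop.comp (tendsto_log_nhdsGT_zero.comp hsurv)

end ProbabilityTheory

lemma exists_isProbabilityMeasure_measureReal_Ioi_eq {T : ℝ → ℝ} (hT : Antitone T)
    (hT_rc : ∀ x, ContinuousWithinAt T (Ici x) x) (hT_bot : Tendsto T atBot (𝓝 1))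
    (hT_top : Tendsto T atTop (𝓝 0)) :
    ∃ H : Measure ℝ, IsProbabilityMeasure H ∧ ∀ x, H.real (Ioi x) = T x := by
  let G : StieltjesFunction ℝ :=
    ⟨fun x => 1 - T x, fun _ _ h => sub_le_sub_left (hT h) 1,
      fun x => continuousWithinAt_const.sub (hT_rc x)⟩
  have hG_bot : Tendsto G atBot (𝓝 0) := by simpa using hT_bot.const_sub 1
  have hG_top : Tendsto G atTop (𝓝 1) := by simpa using hT_top.const_sub 1
  refine ⟨G.measure, G.isProbabilityMeasure hG_bot hG_top, fun x => ?_⟩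
  rw [measureReal_def, G.measure_Ioi hG_top]
  simp [G, ENNReal.toReal_ofReal (hT.le_of_tendsto hT_top x)]

lemma exists_measureReal_Ioi_eq_exp_neg_comp_cumHazard {F : Measure ℝ} [IsProbabilityMeasure F]
    (hF : ∀ x, cdf F x < 1) {ψ : ℝ → ℝ} (hψ : Monotone ψ) (hψ_cont : Continuous ψ)
    (hψ0 : ψ 0 = 0) (hψ_top : Tendsto ψ atTop atTop) :
    ∃ H : Measure ℝ, IsProbabilityMeasure H ∧
      ∀ x, H.real (Ioi x) = exp (-ψ (cumHazard F x)) := by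
  have hcont : Continuous fun t => exp (-ψ t) := by fun_prop
  refine exists_isProbabilityMeasure_measureReal_Ioi_eq
    (fun _ _ h => exp_le_exp.2 (neg_le_neg (hψ (monotone_cumHazard hF h))))
    (fun x => hcont.continuousAt.comp_continuousWithinAt (continuousWithinAt_cumHazard (hF x)))
    ?_ (tendsto_exp_neg_atTop_nhds_zero.comp (hψ_top.comp (tendsto_cumHazard_atTop hF)))
  simpa [Function.comp_def, hψ0] using (hcont.tendsto 0).comp tendsto_cumHazard_atBot

lemma MeasureTheory.Measure.ext_of_measureReal_Ioi {μ ν : Measure ℝ} [IsProbabilityMeasure μ]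
    [IsProbabilityMeasure ν] (h : ∀ x, μ.real (Ioi x) = ν.real (Ioi x)) : μ = ν := by
  refine Measure.ext_of_Iic μ ν fun x => ?_
  rw [← measureReal_eq_measureReal_iff, ← compl_Ioi, probReal_compl_eq_one_sub measurableSet_Ioi,
    probReal_compl_eq_one_sub measurableSet_Ioi, h]

section Independent

variable {Ω : Type*} [MeasurableSpace Ω] {μ : Measure Ω} {ξ₁ ξ₂ : Ω → ℝ}

lemma map_min_eq_of_indepFun [IsProbabilityMeasure μ] {F : Measure ℝ} [IsProbabilityMeasure F]
    (h₁ : Measurable ξ₁) (h₂ : Measurable ξ₂) (hind : IndepFun ξ₁ ξ₂ μ)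
    (h : ∀ x, μ.real (ξ₁ ⁻¹' Ioi x) * μ.real (ξ₂ ⁻¹' Ioi x) = F.real (Ioi x)) :
    μ.map (fun ω => min (ξ₁ ω) (ξ₂ ω)) = F := by
  have := Measure.isProbabilityMeasure_map (μ := μ) (h₁.min h₂).aemeasurable
  refine Measure.ext_of_measureReal_Ioi fun x => ?_
  have hpre : (fun ω => min (ξ₁ ω) (ξ₂ ω)) ⁻¹' Ioi x = ξ₁ ⁻¹' Ioi x ∩ ξ₂ ⁻¹' Ioi x := by
    ext ω; simp
  rw [map_measureReal_apply (h₁.min h₂) measurableSet_Ioi, hpre, ← h x, measureReal_def,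
    hind.measure_inter_preimage_eq_mul _ _ measurableSet_Ioi measurableSet_Ioi,
    ENNReal.toReal_mul, measureReal_def, measureReal_def]

lemma lintegral_ofReal_comp_eq_top [IsFiniteMeasure μ] {ξ : Ω → ℝ} (hξ : Measurable ξ)
    {g : ℝ → ℝ} (hg : Monotone g) (h : ∀ n : ℕ, ∃ y, (n : ℝ) ≤ g y * μ.real (ξ ⁻¹' Ioi y)) :
    ∫⁻ ω, ENNReal.ofReal (g (ξ ω)) ∂μ = ∞ := by
  by_contra hne
  obtain ⟨n, hn⟩ := ENNReal.exists_nat_gt hne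
  obtain ⟨y, hy⟩ := h n
  refine hn.not_ge ?_
  calc (n : ℝ≥0∞) = ENNReal.ofReal n := (ENNReal.ofReal_natCast n).symm
    _ ≤ ENNReal.ofReal (g y * μ.real (ξ ⁻¹' Ioi y)) := ENNReal.ofReal_le_ofReal hy
    _ = ∫⁻ _ in ξ ⁻¹' Ioi y, ENNReal.ofReal (g y) ∂μ := by
      rw [ENNReal.ofReal_mul' measureReal_nonneg, ofReal_measureReal, setLIntegral_const]
    _ ≤ ∫⁻ ω in ξ ⁻¹' Ioi y, ENNReal.ofReal (g (ξ ω)) ∂μ :=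
      setLIntegral_mono' (hξ measurableSet_Ioi) fun _ hω =>
        ENNReal.ofReal_le_ofReal (hg (le_of_lt hω))
    _ ≤ _ := setLIntegral_le_lintegral _ _

end Independent

lemma exists_seq_add_one_le (f : ℕ → ℝ → ℝ) :
    ∃ c : ℕ → ℝ, c 0 = 0 ∧ ∀ k, c k + 1 ≤ c (k + 1) ∧ f k (c k) ≤ c (k + 1) :=
  ⟨fun n => Nat.rec 0 (fun k ck => max (f k ck) (ck + 1)) n, rfl,
    fun _ => ⟨le_max_right _ _, le_max_left _ _⟩⟩

theorem min_of_two_with_heavy_g_moment_general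
    (F : Measure ℝ) [IsProbabilityMeasure F]
    (hF : ∀ x : ℝ, F (Set.Iic x) < 1)
    (g : ℝ → ℝ) (hg_mono : Monotone g)
    (hg_tendsto : Tendsto g atTop atTop) :
    ∃ H₁ H₂ : Measure ℝ, IsProbabilityMeasure H₁ ∧ IsProbabilityMeasure H₂ ∧
      ∀ (Ω : Type) (mΩ : MeasurableSpace Ω) (μ : Measure Ω), IsProbabilityMeasure μ →
        ∀ ξ₁ ξ₂ : Ω → ℝ, Measurable ξ₁ → Measurable ξ₂ →
          μ.map ξ₁ = H₁ → μ.map ξ₂ = H₂ → IndepFun ξ₁ ξ₂ μ →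
          μ.map (fun ω => min (ξ₁ ω) (ξ₂ ω)) = F ∧
          ∫⁻ ω, ENNReal.ofReal (g (ξ₁ ω)) ∂μ = ⊤ ∧
          ∫⁻ ω, ENNReal.ofReal (g (ξ₂ ω)) ∂μ = ⊤ := by
  have hF' (x : ℝ) : cdf F x < 1 := cdf_lt_one F (hF x)
  choose z hz using fun M : ℝ => (hg_tendsto.eventually_ge_atTop M).exists
  -- the block `[c k, c (k + 1))` reaches past `cumHazard F y` for a `y` with `k exp (c k) ≤ g y`
  obtain ⟨c, hc0, hc⟩ := exists_seq_add_one_le fun k a => cumHazard F (z (k * exp a))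
  have hc_step (k : ℕ) := (hc k).1
  have hc_mono : Monotone c := monotone_nat_of_le_succ fun k => by linarith [hc_step k]
  have hc_nonneg (k : ℕ) : 0 ≤ c k := hc0 ▸ hc_mono k.zero_le
  set E := evenBlocks c
  obtain ⟨H₁, hH₁, hH₁_tail⟩ := exists_measureReal_Ioi_eq_exp_neg_comp_cumHazard hF'
    monotone_occupationTime continuous_occupationTime occupationTime_zero
    (tendsto_occupationTime_evenBlocks hc0.ge hc_step)
  obtain ⟨H₂, hH₂, hH₂_tail⟩ := exists_measureReal_Ioi_eq_exp_neg_comp_cumHazard hF'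
    monotone_occupationTime continuous_occupationTime occupationTime_zero
    (tendsto_occupationTime_compl_evenBlocks hc0.ge hc_step)
  refine ⟨H₁, H₂, hH₁, hH₂, fun Ω _ μ _ ξ₁ ξ₂ h₁ h₂ hmap₁ hmap₂ hind => ?_⟩
  have tail₁ (x : ℝ) : μ.real (ξ₁ ⁻¹' Ioi x) = exp (-occupationTime E (cumHazard F x)) := by
    rw [← map_measureReal_apply h₁ measurableSet_Ioi, hmap₁, hH₁_tail]
  have tail₂ (x : ℝ) : μ.real (ξ₂ ⁻¹' Ioi x) = exp (-occupationTime Eᶜ (cumHazard F x)) := by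
    rw [← map_measureReal_apply h₂ measurableSet_Ioi, hmap₂, hH₂_tail]
  refine ⟨map_min_eq_of_indepFun h₁ h₂ hind fun x => ?_,
    lintegral_ofReal_comp_eq_top h₁ hg_mono fun n =>
      ⟨z ((2 * n + 1 : ℕ) * exp (c (2 * n + 1))), ?_⟩,
    lintegral_ofReal_comp_eq_top h₂ hg_mono fun n => ⟨z ((2 * n : ℕ) * exp (c (2 * n))), ?_⟩⟩
  · rw [tail₁, tail₂, ← exp_add, ← neg_add, occupationTime_add_occupationTime_compl
      (measurableSet_evenBlocks c) (cumHazard_nonneg F x),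
      measureReal_Ioi_eq_exp_neg_cumHazard F (hF' x)]
  · rw [tail₁]
    exact le_trans (by push_cast; linarith) (le_mul_exp_neg_occupationTime (k := 2 * n + 1)
      (hc_nonneg _) (disjoint_evenBlocks_Ioo hc_mono n) (hc _).2 (hz _))
  · rw [tail₂]
    exact le_trans (by push_cast; linarith) (le_mul_exp_neg_occupationTime (k := 2 * n)
      (hc_nonneg _) (disjoint_compl_left_iff_subset.2 (Ioo_subset_evenBlocks c n)) (hc _).2 (hz _))

/-- Let `F` be a probability distribution on `ℝ` with right-unbounded
support (its CDF satisfies `F(x) < 1` for all `x`), and let `g : ℝ → ℝ` be a non-negative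
nondecreasing function with `g(x) → ∞` as `x → ∞`. Then there exist probability
distributions `H₁` and `H₂` on `ℝ` such that, whenever `ξ₁` and `ξ₂` are independent random
variables with distributions `H₁` and `H₂`, the random variable `min (ξ₁, ξ₂)` has
distribution `F` and `E g(ξ₁) = E g(ξ₂) = ∞`. -/
theorem min_of_two_with_heavy_g_moment
    (F : Measure ℝ) [IsProbabilityMeasure F]
    (hF : ∀ x : ℝ, F (Set.Iic x) < 1)
    (g : ℝ → ℝ) (hg_nonneg : ∀ x, 0 ≤ g x) (hg_mono : Monotone g)
    (hg_tendsto : Tendsto g atTop atTop) :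
    ∃ H₁ H₂ : Measure ℝ, IsProbabilityMeasure H₁ ∧ IsProbabilityMeasure H₂ ∧
      ∀ (Ω : Type) (mΩ : MeasurableSpace Ω) (μ : Measure Ω), IsProbabilityMeasure μ →
        ∀ ξ₁ ξ₂ : Ω → ℝ, Measurable ξ₁ → Measurable ξ₂ →
          μ.map ξ₁ = H₁ → μ.map ξ₂ = H₂ → IndepFun ξ₁ ξ₂ μ →
          μ.map (fun ω => min (ξ₁ ω) (ξ₂ ω)) = F ∧
          ∫⁻ ω, ENNReal.ofReal (g (ξ₁ ω)) ∂μ = ⊤ ∧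
          ∫⁻ ω, ENNReal.ofReal (g (ξ₂ ω)) ∂μ = ⊤ :=
  min_of_two_with_heavy_g_moment_general F hF g hg_mono hg_tendsto
end

section
/- Let F be a light-tailed probability distribution on ℝ with right-unbounded support. Then there exist two heavy-tailed probability distributions H₁ and H₂ on ℝ such that, for independent random variables ξ₁ with distribution H₁ and ξ₂ with distribution H₂, the random variable min(ξ₁, ξ₂) has distribution F. -/
/-!
Write the survival function of `F` as `exp (-R)` with the hazard `R = -log (1 - cdf F)`, which is
nondecreasing, right-continuous and tends to `∞`. Cut `[0, ∞)` into consecutive blocks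
`[bₙ, bₙ₊₁)`, let `A` be the union of the even ones, and let `g_A t` be the length of `A ∩ [0, t)`.
Since `g_A + g_{Aᶜ} = id` on `[0, ∞)`, the survival functions `exp (-g_A ∘ R)` and
`exp (-g_{Aᶜ} ∘ R)` multiply to that of `F`, which is exactly the law of the minimum of two
independent variables. They are proper distributions because block `n` has length at least `n`, so
`g_A` and `g_{Aᶜ}` are unbounded. The blocks also grow so fast (`bₙ₊₁ ≥ R (n (bₙ + 1))`) that
when `g_A` is flat on block `n`, the hazard `g_A (R x)` at `x = n (bₙ + 1)` is at most
`bₙ < x / n`; this defeats every exponential moment.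
-/

open MeasureTheory ProbabilityTheory Filter Set Topology

theorem exists_isProbabilityMeasure_measure_Ioi_eq_exp_neg {G : ℝ → ℝ} (hG : Monotone G)
    (hG_rc : ∀ x, ContinuousWithinAt G (Ici x) x) (hG_bot : Tendsto G atBot (𝓝 0))
    (hG_top : Tendsto G atTop atTop) :
    ∃ H : Measure ℝ, IsProbabilityMeasure H ∧
      ∀ x, H (Ioi x) = ENNReal.ofReal (Real.exp (-G x)) := by
  have hcont : Continuous fun t => 1 - Real.exp (-t) := by fun_prop
  let f : StieltjesFunction ℝ :=
    { toFun x := 1 - Real.exp (-G x)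
      mono' _ _ hxy := sub_le_sub_left (Real.exp_le_exp.2 (neg_le_neg (hG hxy))) 1
      right_continuous' x := hcont.continuousAt.comp_continuousWithinAt (hG_rc x) }
  have hf_bot : Tendsto f atBot (𝓝 0) := by
    simpa [Function.comp_def] using (hcont.tendsto 0).comp hG_bot
  have hf_top : Tendsto f atTop (𝓝 1) := by
    simpa [Function.comp_def] using
      (Real.tendsto_exp_atBot.comp (tendsto_neg_atTop_atBot.comp hG_top)).const_sub 1
  refine ⟨f.measure, f.isProbabilityMeasure hf_bot hf_top, fun x => ?_⟩
  rw [f.measure_Ioi hf_top]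
  simp [f]

theorem lintegral_exp_mul_eq_top {H : Measure ℝ} {G : ℝ → ℝ}
    (hH : ∀ x, H (Ioi x) = ENNReal.ofReal (Real.exp (-G x))) {l : ℝ} (hl : 0 ≤ l)
    (hG : ∀ C, ∃ x, C ≤ l * x - G x) :
    ∫⁻ x, ENNReal.ofReal (Real.exp (l * x)) ∂H = ⊤ := by
  refine ENNReal.eq_top_of_forall_nnreal_le fun r => ?_
  obtain ⟨x, hx⟩ := hG r
  have hmarkov := mul_meas_ge_le_lintegral₀
    (f := fun y => ENNReal.ofReal (Real.exp (l * y))) (μ := H) (by fun_prop)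
    (ENNReal.ofReal (Real.exp (l * x)))
  calc (r : ENNReal) = ENNReal.ofReal r := by simp
    _ ≤ ENNReal.ofReal (Real.exp (l * x - G x)) :=
        ENNReal.ofReal_le_ofReal ((Real.add_one_le_exp _).trans' (by linarith)
          |>.trans (Real.exp_le_exp.2 hx))
    _ = ENNReal.ofReal (Real.exp (l * x)) * H (Ioi x) := by
        rw [hH, ← ENNReal.ofReal_mul (Real.exp_nonneg _), ← Real.exp_add, sub_eq_add_neg]
    _ ≤ ENNReal.ofReal (Real.exp (l * x)) *
          H {y | ENNReal.ofReal (Real.exp (l * x)) ≤ ENNReal.ofReal (Real.exp (l * y))} := by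
        gcongr
        intro y hy
        exact ENNReal.ofReal_le_ofReal (Real.exp_le_exp.2 (by nlinarith [mem_Ioi.1 hy]))
    _ ≤ _ := hmarkov

theorem map_min_eq_of_measure_Ioi_mul_eq {Ω : Type*} [MeasurableSpace Ω] {μ : Measure Ω}
    [IsProbabilityMeasure μ] {ξ₁ ξ₂ : Ω → ℝ} (h₁ : Measurable ξ₁) (h₂ : Measurable ξ₂)
    (hind : IndepFun ξ₁ ξ₂ μ) {F : Measure ℝ} [IsProbabilityMeasure F]
    (h : ∀ x, μ.map ξ₁ (Ioi x) * μ.map ξ₂ (Ioi x) = F (Ioi x)) :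
    μ.map (fun ω => min (ξ₁ ω) (ξ₂ ω)) = F := by
  have hmin : Measurable fun ω => min (ξ₁ ω) (ξ₂ ω) := h₁.min h₂
  have : IsProbabilityMeasure (μ.map fun ω => min (ξ₁ ω) (ξ₂ ω)) :=
    Measure.isProbabilityMeasure_map hmin.aemeasurable
  refine Measure.ext_of_Iic _ _ fun x => ?_
  have hIoi : (μ.map fun ω => min (ξ₁ ω) (ξ₂ ω)) (Ioi x) = F (Ioi x) := by
    have hpre : (fun ω => min (ξ₁ ω) (ξ₂ ω)) ⁻¹' Ioi x = ξ₁ ⁻¹' Ioi x ∩ ξ₂ ⁻¹' Ioi x := by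
      ext ω
      simp
    rw [Measure.map_apply hmin measurableSet_Ioi, hpre,
      hind.measure_inter_preimage_eq_mul _ _ measurableSet_Ioi measurableSet_Ioi,
      ← Measure.map_apply h₁ measurableSet_Ioi, ← Measure.map_apply h₂ measurableSet_Ioi, h]
  rw [← compl_Ioi, prob_compl_eq_one_sub measurableSet_Ioi,
    prob_compl_eq_one_sub measurableSet_Ioi, hIoi]

noncomputable def hazard (F : Measure ℝ) (x : ℝ) : ℝ := -Real.log (1 - cdf F x)

section hazard

variable {F : Measure ℝ}

theorem continuousAt_neg_log_one_sub {y : ℝ} (hy : y < 1) :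
    ContinuousAt (fun t => -Real.log (1 - t)) y :=
  ((Real.continuousAt_log (by linarith)).comp (continuous_sub_left 1).continuousAt).neg

theorem cdf_lt_one [IsProbabilityMeasure F] {x : ℝ} (hx : F (Iic x) < 1) : cdf F x < 1 := by
  rwa [← ENNReal.ofReal_lt_one, ofReal_cdf]

theorem hazard_nonneg (F : Measure ℝ) (x : ℝ) : 0 ≤ hazard F x :=
  neg_nonneg.2 (Real.log_nonpos (by linarith [cdf_le_one F x]) (by linarith [cdf_nonneg F x]))

theorem tendsto_hazard_atBot (F : Measure ℝ) : Tendsto (hazard F) atBot (𝓝 0) := by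
  have h := (continuousAt_neg_log_one_sub zero_lt_one).tendsto.comp (tendsto_cdf_atBot F)
  simp only [sub_zero, Real.log_one, neg_zero] at h
  exact h

theorem monotone_hazard (hF : ∀ x, cdf F x < 1) : Monotone (hazard F) := fun x y hxy =>
  neg_le_neg (Real.log_le_log (by linarith [hF y]) (by linarith [monotone_cdf F hxy]))

theorem continuousWithinAt_hazard (hF : ∀ x, cdf F x < 1) (x : ℝ) :
    ContinuousWithinAt (hazard F) (Ici x) x :=
  (continuousAt_neg_log_one_sub (hF x)).comp_continuousWithinAt ((cdf F).right_continuous' x)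

theorem tendsto_hazard_atTop (hF : ∀ x, cdf F x < 1) : Tendsto (hazard F) atTop atTop := by
  have hsurv : Tendsto (fun x => 1 - cdf F x) atTop (𝓝[>] 0) :=
    tendsto_nhdsWithin_of_tendsto_nhds_of_eventually_within _
      (by simpa using (tendsto_cdf_atTop F).const_sub 1)
      (Eventually.of_forall fun x => sub_pos.2 (hF x))
  exact tendsto_neg_atBot_atTop.comp (Real.tendsto_log_nhdsGT_zero.comp hsurv)

theorem measure_Ioi_eq_exp_neg_hazard [IsProbabilityMeasure F] (hF : ∀ x, cdf F x < 1)
    (x : ℝ) : F (Ioi x) = ENNReal.ofReal (Real.exp (-hazard F x)) := by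
  rw [hazard, neg_neg, Real.exp_log (sub_pos.2 (hF x)),
    ← (cdf F).measure_Ioi (tendsto_cdf_atTop F), measure_cdf]

end hazard

noncomputable def coveredLength (A : Set ℝ) (t : ℝ) : ℝ := volume.real (A ∩ Ico 0 t)

section coveredLength

variable {A : Set ℝ} {s t : ℝ}

theorem volume_inter_Ico_ne_top (A : Set ℝ) (s t : ℝ) : volume (A ∩ Ico s t) ≠ ⊤ :=
  ((measure_mono inter_subset_right).trans_lt measure_Ico_lt_top).ne

theorem coveredLength_mono (A : Set ℝ) : Monotone (coveredLength A) := fun _ _ hst =>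
  measureReal_mono (inter_subset_inter_right _ (Ico_subset_Ico_right hst))
    (volume_inter_Ico_ne_top A 0 _)

theorem coveredLength_of_nonpos (ht : t ≤ 0) : coveredLength A t = 0 := by
  simp [coveredLength, Ico_eq_empty_of_le ht]

theorem coveredLength_le (ht : 0 ≤ t) : coveredLength A t ≤ t :=
  calc coveredLength A t ≤ volume.real (Ico 0 t) :=
        measureReal_mono inter_subset_right measure_Ico_lt_top.ne
    _ = t := by simp [ht]

theorem coveredLength_le_add_sub (hst : s ≤ t) :
    coveredLength A t ≤ coveredLength A s + (t - s) := by
  have hcover : A ∩ Ico 0 t ⊆ A ∩ Ico 0 s ∪ Ico s t := fun x ⟨hxA, hx0, hxt⟩ =>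
    (lt_or_ge x s).imp (fun hxs => ⟨hxA, hx0, hxs⟩) fun hsx => ⟨hsx, hxt⟩
  calc coveredLength A t ≤ volume.real (A ∩ Ico 0 s ∪ Ico s t) := measureReal_mono hcover
        (measure_union_ne_top (volume_inter_Ico_ne_top A 0 s) measure_Ico_lt_top.ne)
    _ ≤ coveredLength A s + volume.real (Ico s t) := measureReal_union_le _ _
    _ = coveredLength A s + (t - s) := by simp [hst]

theorem lipschitzWith_one_coveredLength (A : Set ℝ) : LipschitzWith 1 (coveredLength A) := by
  refine LipschitzWith.of_le_add_mul 1 fun s t => ?_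
  simp only [NNReal.coe_one, one_mul]
  rcases le_total s t with hst | hts
  · linarith [coveredLength_mono A hst, dist_nonneg (x := s) (y := t)]
  · simpa [Real.dist_eq, abs_of_nonneg (sub_nonneg.2 hts)] using coveredLength_le_add_sub hts

theorem coveredLength_add_compl (hA : MeasurableSet A) (ht : 0 ≤ t) :
    coveredLength A t + coveredLength Aᶜ t = t := by
  simpa [coveredLength, inter_comm, sdiff_eq, ht] using
    measureReal_inter_add_sdiff (μ := volume) (s := Ico 0 t) hA measure_Ico_lt_top.ne

theorem coveredLength_le_of_disjoint (h : Disjoint A (Ico s t)) :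
    coveredLength A t ≤ coveredLength A s :=
  measureReal_mono (fun _ ⟨hxA, hx0, hxt⟩ =>
    ⟨hxA, hx0, not_le.1 fun hsx => h.ne_of_mem hxA ⟨hsx, hxt⟩ rfl⟩)
    (volume_inter_Ico_ne_top A 0 s)

theorem sub_le_coveredLength (hA : MeasurableSet A) (hs : 0 ≤ s) (hst : s ≤ t)
    (h : Ico s t ⊆ A) : t - s ≤ coveredLength A t := by
  have hcompl : coveredLength Aᶜ t ≤ s :=
    (coveredLength_le_of_disjoint (disjoint_compl_left.mono_right h)).trans (coveredLength_le hs)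
  linarith [coveredLength_add_compl hA (hs.trans hst)]

end coveredLength

theorem Monotone.disjoint_biUnion_Ico_succ {b : ℕ → ℝ} (hb : Monotone b) {s : Set ℕ} {n : ℕ}
    (hn : n ∉ s) : Disjoint (⋃ m ∈ s, Ico (b m) (b (m + 1))) (Ico (b n) (b (n + 1))) :=
  disjoint_iUnion₂_left.2 fun _ hm =>
    hb.pairwise_disjoint_on_Ico_succ (ne_of_mem_of_not_mem hm hn)

section blocks

variable {A : Set ℝ} {b : ℕ → ℝ} {R : ℝ → ℝ}

theorem tendsto_coveredLength_atTop (hA : MeasurableSet A) (hb : ∀ n, 0 ≤ b n)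
    (hlen : ∀ n : ℕ, b n + n ≤ b (n + 1))
    (hin : ∃ᶠ n in atTop, Ico (b n) (b (n + 1)) ⊆ A) :
    Tendsto (coveredLength A) atTop atTop := by
  refine tendsto_atTop_atTop_of_monotone (coveredLength_mono A) fun C => ?_
  obtain ⟨n, hn, hsub⟩ := frequently_atTop.1 hin ⌈C⌉₊
  refine ⟨b (n + 1), ?_⟩
  calc C ≤ n := (Nat.le_ceil C).trans (Nat.cast_le.2 hn)
    _ ≤ b (n + 1) - b n := by linarith [hlen n]
    _ ≤ coveredLength A (b (n + 1)) :=
        sub_le_coveredLength hA (hb n) (by linarith [hlen n, n.cast_nonneg (α := ℝ)]) hsub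

theorem exists_le_mul_sub_coveredLength (hb : ∀ n, 0 ≤ b n)
    (hRb : ∀ n : ℕ, R (n * (b n + 1)) ≤ b (n + 1))
    (hgap : ∃ᶠ n in atTop, Disjoint A (Ico (b n) (b (n + 1)))) {l : ℝ} (hl : 0 < l) (C : ℝ) :
    ∃ x, C ≤ l * x - coveredLength A (R x) := by
  obtain ⟨n, hn, hdisj⟩ := frequently_atTop.1 hgap ⌈max C 1 / l⌉₊
  have hln : max C 1 ≤ l * n := by
    rw [← div_le_iff₀' hl]
    exact (Nat.le_ceil _).trans (Nat.cast_le.2 hn)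
  refine ⟨n * (b n + 1), ?_⟩
  have hflat : coveredLength A (R (n * (b n + 1))) ≤ b n :=
    calc coveredLength A (R (n * (b n + 1))) ≤ coveredLength A (b (n + 1)) :=
          coveredLength_mono A (hRb n)
      _ ≤ coveredLength A (b n) := coveredLength_le_of_disjoint hdisj
      _ ≤ b n := coveredLength_le (hb n)
  nlinarith [le_max_left C 1, le_max_right C 1, hb n]

end blocks

noncomputable def blockSeq (R : ℝ → ℝ) : ℕ → ℝ
  | 0 => 0
  | n + 1 => max (blockSeq R n + n) (R (n * (blockSeq R n + 1)))

section blockSeq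

variable {R : ℝ → ℝ}

theorem blockSeq_add_le (R : ℝ → ℝ) (n : ℕ) : blockSeq R n + n ≤ blockSeq R (n + 1) :=
  le_max_left _ _

theorem le_blockSeq_succ (R : ℝ → ℝ) (n : ℕ) :
    R (n * (blockSeq R n + 1)) ≤ blockSeq R (n + 1) :=
  le_max_right _ _

theorem monotone_blockSeq (R : ℝ → ℝ) : Monotone (blockSeq R) :=
  monotone_nat_of_le_succ fun n => by linarith [blockSeq_add_le R n, n.cast_nonneg (α := ℝ)]

theorem blockSeq_nonneg (R : ℝ → ℝ) (n : ℕ) : 0 ≤ blockSeq R n :=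
  monotone_blockSeq R n.zero_le

theorem exists_heavyTailed_measure_Ioi_eq (hR : Monotone R)
    (hR_rc : ∀ x, ContinuousWithinAt R (Ici x) x) (hR_bot : Tendsto R atBot (𝓝 0))
    (hR_top : Tendsto R atTop atTop) {A : Set ℝ} (hA : MeasurableSet A)
    (hin : ∃ᶠ n in atTop, Ico (blockSeq R n) (blockSeq R (n + 1)) ⊆ A)
    (hgap : ∃ᶠ n in atTop, Disjoint A (Ico (blockSeq R n) (blockSeq R (n + 1)))) :
    ∃ H : Measure ℝ, IsProbabilityMeasure H ∧
      (∀ x, H (Ioi x) = ENNReal.ofReal (Real.exp (-coveredLength A (R x)))) ∧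
      ∀ l, 0 < l → ∫⁻ x, ENNReal.ofReal (Real.exp (l * x)) ∂H = ⊤ := by
  have hcont := (lipschitzWith_one_coveredLength A).continuous
  obtain ⟨H, hH_prob, hH⟩ := exists_isProbabilityMeasure_measure_Ioi_eq_exp_neg
    ((coveredLength_mono A).comp hR)
    (fun x => hcont.continuousAt.comp_continuousWithinAt (hR_rc x))
    (by simpa [coveredLength_of_nonpos] using (hcont.tendsto 0).comp hR_bot)
    ((tendsto_coveredLength_atTop hA (blockSeq_nonneg R) (blockSeq_add_le R) hin).comp hR_top)
  exact ⟨H, hH_prob, hH, fun l hl => lintegral_exp_mul_eq_top hH hl.le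
    (exists_le_mul_sub_coveredLength (blockSeq_nonneg R) (le_blockSeq_succ R) hgap hl)⟩

end blockSeq

theorem light_tailed_is_min_of_two_heavy_tailed_general
    (F : Measure ℝ) [IsProbabilityMeasure F]
    (hF_unbounded : ∀ x : ℝ, F (Set.Iic x) < 1) :
    ∃ H₁ H₂ : Measure ℝ, IsProbabilityMeasure H₁ ∧ IsProbabilityMeasure H₂ ∧
      (∀ l : ℝ, 0 < l → ∫⁻ x, ENNReal.ofReal (Real.exp (l * x)) ∂H₁ = ⊤) ∧
      (∀ l : ℝ, 0 < l → ∫⁻ x, ENNReal.ofReal (Real.exp (l * x)) ∂H₂ = ⊤) ∧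
      ∀ (Ω : Type) (mΩ : MeasurableSpace Ω) (μ : Measure Ω), IsProbabilityMeasure μ →
        ∀ ξ₁ ξ₂ : Ω → ℝ, Measurable ξ₁ → Measurable ξ₂ →
          μ.map ξ₁ = H₁ → μ.map ξ₂ = H₂ → IndepFun ξ₁ ξ₂ μ →
          μ.map (fun ω => min (ξ₁ ω) (ξ₂ ω)) = F := by
  have hF : ∀ x, cdf F x < 1 := fun x => cdf_lt_one (hF_unbounded x)
  set b := blockSeq (hazard F)
  set A := ⋃ n ∈ {n : ℕ | Even n}, Ico (b n) (b (n + 1))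
  have hA : MeasurableSet A := by measurability
  have hin (n : ℕ) (hn : Even n) : Ico (b n) (b (n + 1)) ⊆ A :=
    subset_biUnion_of_mem (u := fun n => Ico (b n) (b (n + 1))) hn
  have hgap (n : ℕ) (hn : Odd n) : Disjoint A (Ico (b n) (b (n + 1))) :=
    (monotone_blockSeq _).disjoint_biUnion_Ico_succ (Nat.not_even_iff_odd.2 hn)
  have heavy (A : Set ℝ) := exists_heavyTailed_measure_Ioi_eq (A := A) (monotone_hazard hF)
    (continuousWithinAt_hazard hF) (tendsto_hazard_atBot F) (tendsto_hazard_atTop hF)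
  obtain ⟨H₁, hH₁_prob, hH₁, hH₁_heavy⟩ := heavy A hA (Nat.frequently_even.mono hin)
    (Nat.frequently_odd.mono hgap)
  obtain ⟨H₂, hH₂_prob, hH₂, hH₂_heavy⟩ := heavy Aᶜ hA.compl
    (Nat.frequently_odd.mono fun n hn => (hgap n hn).subset_compl_left)
    (Nat.frequently_even.mono fun n hn => disjoint_compl_left.mono_right (hin n hn))
  refine ⟨H₁, H₂, hH₁_prob, hH₂_prob, hH₁_heavy, hH₂_heavy,
    fun Ω _ μ _ ξ₁ ξ₂ h₁ h₂ hmap₁ hmap₂ hind => map_min_eq_of_measure_Ioi_mul_eq h₁ h₂ hind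
    fun x => ?_⟩
  rw [hmap₁, hmap₂, hH₁, hH₂, measure_Ioi_eq_exp_neg_hazard hF,
    ← ENNReal.ofReal_mul (by positivity), ← Real.exp_add, ← neg_add,
    coveredLength_add_compl hA (hazard_nonneg F x)]

/-- **Corollary 1.** Any light-tailed probability distribution `F` on `ℝ`
with right-unbounded support is the distribution of the minimum of two independent
heavy-tailed random variables.  Here a distribution `H` is heavy-tailed if
`∫ exp (λ x) dH = ∞` for all `λ > 0`, and light-tailed if this integral is finite for
some `λ > 0`. -/
theorem light_tailed_is_min_of_two_heavy_tailed
    (F : Measure ℝ) [IsProbabilityMeasure F]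
    (hF_unbounded : ∀ x : ℝ, F (Set.Iic x) < 1)
    (hF_light : ∃ l : ℝ, 0 < l ∧ ∫⁻ x, ENNReal.ofReal (Real.exp (l * x)) ∂F < ⊤) :
    ∃ H₁ H₂ : Measure ℝ, IsProbabilityMeasure H₁ ∧ IsProbabilityMeasure H₂ ∧
      (∀ l : ℝ, 0 < l → ∫⁻ x, ENNReal.ofReal (Real.exp (l * x)) ∂H₁ = ⊤) ∧
      (∀ l : ℝ, 0 < l → ∫⁻ x, ENNReal.ofReal (Real.exp (l * x)) ∂H₂ = ⊤) ∧
      ∀ (Ω : Type) (mΩ : MeasurableSpace Ω) (μ : Measure Ω), IsProbabilityMeasure μ →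
        ∀ ξ₁ ξ₂ : Ω → ℝ, Measurable ξ₁ → Measurable ξ₂ →
          μ.map ξ₁ = H₁ → μ.map ξ₂ = H₂ → IndepFun ξ₁ ξ₂ μ →
          μ.map (fun ω => min (ξ₁ ω) (ξ₂ ω)) = F :=
  light_tailed_is_min_of_two_heavy_tailed_general F hF_unbounded
end

section
/- Let F be a probability distribution on ℝ with right-unbounded support, and let g : ℝ → ℝ be a positive, strictly increasing function with g(x) → ∞ as x → ∞. Then, for any n ∈ ℕ and any k with 1 < k ≤ n, there exist probability distributions H₁, …, Hₙ on ℝ such that for independent random variables ξ₁, …, ξₙ with these respective distributions: (1) for every set of indices 1 ≤ i₁ < i₂ < ⋯ < i_k ≤ n, the distribution F stochastically dominates the distribution of min(ξ_{i₁}, …, ξ_{i_k}); and (2) for every set of indices 1 ≤ i₁ < i₂ < ⋯ < i_{k−1} ≤ n, one has E g(min(ξ_{i₁}, …, ξ_{i_{k−1}})) = ∞. -/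
/-!
Cut the line into cells `(a (m - 1), a m]` along a fast increasing sequence `a`, and list the
sets of fewer than `k` indices so that each one recurs on infinitely many cells. On a cell where
`i` is listed, `ξ i` is distributed like `X ∼ F` with the mass of the cell pushed to its right
endpoint; elsewhere it is distributed like `X`. Of any `k` indices, one is unlisted on the cell
of `x`, so the minimum is `≤ x` at least as often as `X` is. If `k - 1` indices are all listed
on cell `m`, their minimum is `≥ a m` with probability at least `F (a (m - 1), ∞) ^ n`, and `a`
is chosen to grow so fast that `g (a m)` times this probability exceeds `m - 1`.
-/

open MeasureTheory ProbabilityTheory Filter Set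
open scoped ENNReal Topology

theorem Finset.measurable_inf'_apply {δ ι α : Type*} [MeasurableSpace δ] [MeasurableSpace α]
    [SemilatticeInf α] [MeasurableInf₂ α] {s : Finset ι} (hs : s.Nonempty) {f : ι → δ → α}
    (hf : ∀ i ∈ s, Measurable (f i)) : Measurable fun x => s.inf' hs fun i => f i x := by
  have : Measurable (s.inf' hs f) :=
    Finset.inf'_induction hs f (p := Measurable) (fun _ h₁ _ h₂ => h₁.inf h₂) hf
  convert this using 1
  funext x
  exact (Finset.inf'_apply hs f x).symm

theorem exists_seq_frequently_eq (α : Type*) [Countable α] [Nonempty α] :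
    ∃ T : ℕ → α, ∀ a, ∃ᶠ j in atTop, T j = a := by
  obtain ⟨f, hf⟩ := exists_surjective_nat α
  refine ⟨fun j => f j.unpair.1, fun a => frequently_atTop.2 fun N => ?_⟩
  obtain ⟨m, rfl⟩ := hf a
  exact ⟨Nat.pair m N, Nat.right_le_pair m N, by simp only [Nat.unpair_pair]⟩

theorem exists_seq_tendsto_atTop_of_eventually (P : ℕ → ℝ → ℝ → Prop)
    (hP : ∀ j x, ∀ᶠ y in atTop, P j x y) :
    ∃ a : ℕ → ℝ, Monotone a ∧ Tendsto a atTop atTop ∧ ∀ j, P j (a j) (a (j + 1)) := by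
  have hnext : ∀ j x, ∃ y, P j x y ∧ max x j ≤ y := fun j x =>
    ((hP j x).and (eventually_ge_atTop _)).exists
  choose next hnextP hnext_ge using hnext
  let a : ℕ → ℝ := fun j => Nat.rec 0 next j
  have ha_succ : ∀ j, a (j + 1) = next j (a j) := fun _ => rfl
  refine ⟨a, monotone_nat_of_le_succ fun j => ?_, ?_, fun j => ha_succ j ▸ hnextP j (a j)⟩
  · exact ha_succ j ▸ (le_max_left _ _).trans (hnext_ge j (a j))
  · refine (tendsto_add_atTop_iff_nat 1).1 (tendsto_atTop_mono (fun j => ?_)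
      tendsto_natCast_atTop_atTop)
    exact ha_succ j ▸ (le_max_right _ _).trans (hnext_ge j (a j))

theorem eventually_natCast_le_ofReal_mul {β : Type*} {l : Filter β} {g : β → ℝ}
    (hg : Tendsto g l atTop) {c : ℝ≥0∞} (hc : c ≠ 0) (j : ℕ) :
    ∀ᶠ y in l, (j : ℝ≥0∞) ≤ ENNReal.ofReal (g y) * c := by
  have : Tendsto (fun y => ENNReal.ofReal (g y) * c) l (𝓝 ⊤) := by
    simpa only [Function.comp_def, ENNReal.top_mul hc] using ENNReal.Tendsto.mul_const (b := c)
      (ENNReal.tendsto_ofReal_atTop.comp hg) (Or.inl ENNReal.top_ne_zero)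
  exact (ENNReal.tendsto_nhds_top_iff_nat.1 this j).mono fun _ => le_of_lt

noncomputable def ceilIndex (a : ℕ → ℝ) (t : ℝ) : ℕ := sInf {m | t ≤ a m}

open Classical in
/-- Pushing a law forward by `roundUpOn a B` moves the mass of each cell `(a (m - 1), a m]`
(the cell `0` being `(-∞, a 0]`) with `m ∈ B` to its right endpoint `a m`. -/
noncomputable def roundUpOn (a : ℕ → ℝ) (B : Set ℕ) (t : ℝ) : ℝ :=
  if ceilIndex a t ∈ B then a (ceilIndex a t) else t

section Grid

variable {a : ℕ → ℝ} {B : Set ℕ}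

theorem le_apply_ceilIndex (ha : Tendsto a atTop atTop) (t : ℝ) : t ≤ a (ceilIndex a t) :=
  Nat.sInf_mem (ha.eventually_ge_atTop t).exists

theorem apply_lt_of_lt_ceilIndex {t : ℝ} {m : ℕ} (hm : m < ceilIndex a t) : a m < t :=
  not_le.1 (Nat.notMem_of_lt_sInf hm)

theorem ceilIndex_mono (ha : Tendsto a atTop atTop) : Monotone (ceilIndex a) :=
  fun _ _ hst => Nat.sInf_le (hst.trans (le_apply_ceilIndex ha _))

theorem le_roundUpOn (ha : Tendsto a atTop atTop) (t : ℝ) : t ≤ roundUpOn a B t := by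
  unfold roundUpOn
  split_ifs
  exacts [le_apply_ceilIndex ha t, le_rfl]

theorem roundUpOn_le_apply_ceilIndex (ha : Tendsto a atTop atTop) (t : ℝ) :
    roundUpOn a B t ≤ a (ceilIndex a t) := by
  unfold roundUpOn
  split_ifs
  exacts [le_rfl, le_apply_ceilIndex ha t]

theorem monotone_roundUpOn (ha : Tendsto a atTop atTop) : Monotone (roundUpOn a B) := by
  intro t t' htt'
  rcases (ceilIndex_mono ha htt').lt_or_eq with hlt | heq
  · calc roundUpOn a B t ≤ a (ceilIndex a t) := roundUpOn_le_apply_ceilIndex ha t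
      _ ≤ t' := (apply_lt_of_lt_ceilIndex hlt).le
      _ ≤ roundUpOn a B t' := le_roundUpOn ha t'
  · unfold roundUpOn
    rw [heq]
    split_ifs
    exacts [le_rfl, htt']

theorem roundUpOn_le_of_ceilIndex_notMem (ha : Tendsto a atTop atTop) {t x : ℝ}
    (hx : ceilIndex a x ∉ B) (htx : t ≤ x) : roundUpOn a B t ≤ x := by
  rcases (ceilIndex_mono ha htx).lt_or_eq with hlt | heq
  · exact (roundUpOn_le_apply_ceilIndex ha t).trans (apply_lt_of_lt_ceilIndex hlt).le
  · rwa [roundUpOn, heq, if_neg hx]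

theorem apply_succ_le_roundUpOn (ha : Tendsto a atTop atTop) (ha_mono : Monotone a) {j : ℕ}
    (hj : j + 1 ∈ B) {t : ℝ} (ht : a j < t) : a (j + 1) ≤ roundUpOn a B t := by
  have hjt : j < ceilIndex a t := by
    by_contra! h
    exact (ht.trans_le (le_apply_ceilIndex ha t)).not_ge (ha_mono h)
  rcases (Nat.succ_le_of_lt hjt).lt_or_eq with hlt | heq
  · exact (apply_lt_of_lt_ceilIndex hlt).le.trans (le_roundUpOn ha t)
  · rw [roundUpOn, ← heq, if_pos hj]

theorem measure_Iic_le_map_roundUpOn (ha : Tendsto a atTop atTop) (F : Measure ℝ) {x : ℝ}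
    (hx : ceilIndex a x ∉ B) : F (Iic x) ≤ F.map (roundUpOn a B) (Iic x) := by
  rw [Measure.map_apply (monotone_roundUpOn ha).measurable measurableSet_Iic]
  exact measure_mono fun t ht => roundUpOn_le_of_ceilIndex_notMem ha hx ht

theorem measure_Ioi_le_map_roundUpOn (ha : Tendsto a atTop atTop) (ha_mono : Monotone a)
    (F : Measure ℝ) {j : ℕ} (hj : j + 1 ∈ B) :
    F (Ioi (a j)) ≤ F.map (roundUpOn a B) (Ici (a (j + 1))) := by
  rw [Measure.map_apply (monotone_roundUpOn ha).measurable measurableSet_Ici]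
  exact measure_mono fun t ht => apply_succ_le_roundUpOn ha ha_mono hj ht

end Grid

section Minimum

variable {Ω ι : Type*} [MeasurableSpace Ω] {μ : Measure Ω} {ξ : ι → Ω → ℝ}

theorem map_apply_Iic_le_map_inf' (hξ : ∀ i, Measurable (ξ i)) {s : Finset ι}
    (hs : s.Nonempty) {i : ι} (hi : i ∈ s) (x : ℝ) :
    μ.map (ξ i) (Iic x) ≤ μ.map (fun ω => s.inf' hs fun i => ξ i ω) (Iic x) := by
  rw [Measure.map_apply (hξ i) measurableSet_Iic,
    Measure.map_apply (Finset.measurable_inf'_apply hs fun i _ => hξ i) measurableSet_Iic]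
  exact measure_mono fun ω (hω : ξ i ω ≤ x) =>
    show (s.inf' hs fun i => ξ i ω) ≤ x from (Finset.inf'_le _ hi).trans hω

theorem mul_prod_le_lintegral_inf' (hξ : ∀ i, Measurable (ξ i)) (hind : iIndepFun ξ μ)
    {f : ℝ → ℝ≥0∞} (hf : Monotone f) (s : Finset ι) (hs : s.Nonempty) (b : ℝ) :
    f b * ∏ i ∈ s, μ (ξ i ⁻¹' Ici b) ≤ ∫⁻ ω, f (s.inf' hs fun i => ξ i ω) ∂μ := by
  rw [← hind.measure_inter_preimage_eq_mul s fun _ _ => measurableSet_Ici,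
    ← lintegral_indicator_const (Finset.measurableSet_biInter s fun i _ => hξ i measurableSet_Ici)]
  refine lintegral_mono (indicator_le fun ω hω => hf ?_)
  exact Finset.le_inf' hs _ fun i hi => mem_iInter₂.1 hω i hi

end Minimum

def heavyCells {ι : Type*} (T : ℕ → Finset ι) (k : ℕ) (i : ι) : Set ℕ :=
  {m | i ∈ T m ∧ (T m).card < k}

section HeavyLight

variable {Ω ι : Type*} [MeasurableSpace Ω] {μ : Measure Ω} {ξ : ι → Ω → ℝ}
  {F : Measure ℝ} {a : ℕ → ℝ} {T : ℕ → Finset ι} {k : ℕ}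

theorem measure_Iic_le_map_inf'_of_le_card (ha : Tendsto a atTop atTop)
    (hξ : ∀ i, Measurable (ξ i)) (hlaw : ∀ i, μ.map (ξ i) = F.map (roundUpOn a (heavyCells T k i)))
    {s : Finset ι} (hs : s.Nonempty) (hks : k ≤ s.card) (x : ℝ) :
    F (Iic x) ≤ μ.map (fun ω => s.inf' hs fun i => ξ i ω) (Iic x) := by
  obtain ⟨i, hi, hlight⟩ : ∃ i ∈ s, ceilIndex a x ∉ heavyCells T k i := by
    by_contra! h
    obtain ⟨i, hi⟩ := hs
    exact (Finset.card_le_card fun j hj => (h j hj).1).not_gt (hks.trans_lt' (h i hi).2)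
  calc F (Iic x) ≤ F.map (roundUpOn a (heavyCells T k i)) (Iic x) :=
        measure_Iic_le_map_roundUpOn ha F hlight
    _ = μ.map (ξ i) (Iic x) := by rw [hlaw i]
    _ ≤ _ := map_apply_Iic_le_map_inf' hξ hs hi x

theorem lintegral_ofReal_comp_inf'_eq_top [IsProbabilityMeasure F] {g : ℝ → ℝ}
    (hg : Monotone g) {n : ℕ} (ha : Tendsto a atTop atTop) (ha_mono : Monotone a)
    (ha_growth : ∀ j : ℕ, (j : ℝ≥0∞) ≤ ENNReal.ofReal (g (a (j + 1))) * F (Ioi (a j)) ^ n)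
    (hξ : ∀ i, Measurable (ξ i)) (hlaw : ∀ i, μ.map (ξ i) = F.map (roundUpOn a (heavyCells T k i)))
    (hind : iIndepFun ξ μ) {s : Finset ι} (hs : s.Nonempty) (hsk : s.card < k)
    (hsn : s.card ≤ n) (hTs : ∃ᶠ m in atTop, T m = s) :
    ∫⁻ ω, ENNReal.ofReal (g (s.inf' hs fun i => ξ i ω)) ∂μ = ⊤ := by
  by_contra hfin
  obtain ⟨M, hM⟩ := ENNReal.exists_nat_gt hfin
  obtain ⟨m, hms, hmM⟩ := (hTs.and_eventually (eventually_gt_atTop M)).exists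
  obtain ⟨j, rfl⟩ := Nat.exists_eq_add_one_of_ne_zero (by omega : m ≠ 0)
  have hheavy : ∀ i ∈ s, F (Ioi (a j)) ≤ μ (ξ i ⁻¹' Ici (a (j + 1))) := fun i hi => by
    rw [← Measure.map_apply (hξ i) measurableSet_Ici, hlaw i]
    exact measure_Ioi_le_map_roundUpOn ha ha_mono F ⟨hms ▸ hi, hms ▸ hsk⟩
  refine hM.not_ge ?_
  calc (M : ℝ≥0∞) ≤ j := by exact_mod_cast (by omega : M ≤ j)
    _ ≤ ENNReal.ofReal (g (a (j + 1))) * F (Ioi (a j)) ^ n := ha_growth j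
    _ ≤ ENNReal.ofReal (g (a (j + 1))) * F (Ioi (a j)) ^ s.card :=
        mul_le_mul_right (pow_le_pow_of_le_one zero_le prob_le_one hsn) _
    _ ≤ ENNReal.ofReal (g (a (j + 1))) * ∏ i ∈ s, μ (ξ i ⁻¹' Ici (a (j + 1))) :=
        mul_le_mul_right (Finset.pow_card_le_prod _ _ _ hheavy) _
    _ ≤ _ := mul_prod_le_lintegral_inf' hξ hind (ENNReal.ofReal_mono.comp hg) s hs _

end HeavyLight

theorem min_of_many_heavy_light_threshold_general
    (F : Measure ℝ) [IsProbabilityMeasure F]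
    (hF : ∀ x : ℝ, F (Set.Iic x) < 1)
    (g : ℝ → ℝ) (hg_mono : StrictMono g)
    (hg_tendsto : Tendsto g atTop atTop)
    (n k : ℕ) :
    ∃ H : Fin n → Measure ℝ, (∀ i, IsProbabilityMeasure (H i)) ∧
      ∀ (Ω : Type) (mΩ : MeasurableSpace Ω) (μ : Measure Ω), IsProbabilityMeasure μ →
        ∀ ξ : Fin n → Ω → ℝ, (∀ i, Measurable (ξ i)) → (∀ i, μ.map (ξ i) = H i) →
          iIndepFun ξ μ →
          ((∀ (s : Finset (Fin n)) (hs : s.Nonempty), s.card = k →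
              ∀ x : ℝ,
                F (Set.Iic x) ≤
                  (μ.map fun ω => s.inf' hs fun i => ξ i ω) (Set.Iic x)) ∧
            (∀ (s : Finset (Fin n)) (hs : s.Nonempty), s.card = k - 1 →
              ∫⁻ ω, ENNReal.ofReal (g (s.inf' hs fun i => ξ i ω)) ∂μ = ⊤)) := by
  have htail : ∀ x, F (Ioi x) ≠ 0 := fun x => by
    rw [← compl_Iic, prob_compl_eq_one_sub measurableSet_Iic]
    exact (tsub_pos_of_lt (hF x)).ne'
  obtain ⟨a, ha_mono, ha, ha_growth⟩ := exists_seq_tendsto_atTop_of_eventually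
    (fun j x y => (j : ℝ≥0∞) ≤ ENNReal.ofReal (g y) * F (Ioi x) ^ n)
    fun j x => eventually_natCast_le_ofReal_mul hg_tendsto (pow_ne_zero n (htail x)) j
  obtain ⟨T, hT⟩ := exists_seq_frequently_eq (Finset (Fin n))
  refine ⟨fun i => F.map (roundUpOn a (heavyCells T k i)),
    fun i => Measure.isProbabilityMeasure_map (monotone_roundUpOn ha).measurable.aemeasurable, ?_⟩
  intro Ω _ μ _ ξ hξ hlaw hind
  refine ⟨fun s hs hcard => measure_Iic_le_map_inf'_of_le_card ha hξ hlaw hs hcard.ge,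
    fun s hs hcard => ?_⟩
  have hsk : s.card < k := by have := hs.card_pos; omega
  exact lintegral_ofReal_comp_inf'_eq_top hg_mono.monotone ha ha_mono ha_growth hξ hlaw hind hs
    hsk ((Finset.card_le_univ s).trans_eq (Fintype.card_fin n)) (hT s)

/-- **Theorem 2.** Let `F` be a probability distribution on `ℝ` with
right-unbounded support and `g : ℝ → ℝ` a positive, strictly increasing function tending
to `∞`.  For any `n` and any `k` with `1 < k ≤ n` there are distributions `H₁, …, Hₙ`
such that for independent `ξ₁, …, ξₙ` with these distributions: the distribution of the
minimum over any `k` of them is stochastically dominated by `F` (i.e. the CDF of `F` is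
pointwise below the CDF of the minimum), while the minimum over any `k - 1` of them has
`E g(min) = ∞`. -/
theorem min_of_many_heavy_light_threshold
    (F : Measure ℝ) [IsProbabilityMeasure F]
    (hF : ∀ x : ℝ, F (Set.Iic x) < 1)
    (g : ℝ → ℝ) (hg_pos : ∀ x, 0 < g x) (hg_mono : StrictMono g)
    (hg_tendsto : Tendsto g atTop atTop)
    (n k : ℕ) (hk : 1 < k) (hkn : k ≤ n) :
    ∃ H : Fin n → Measure ℝ, (∀ i, IsProbabilityMeasure (H i)) ∧
      ∀ (Ω : Type) (mΩ : MeasurableSpace Ω) (μ : Measure Ω), IsProbabilityMeasure μ →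
        ∀ ξ : Fin n → Ω → ℝ, (∀ i, Measurable (ξ i)) → (∀ i, μ.map (ξ i) = H i) →
          iIndepFun ξ μ →
          ((∀ (s : Finset (Fin n)) (hs : s.Nonempty), s.card = k →
              ∀ x : ℝ,
                F (Set.Iic x) ≤
                  (μ.map fun ω => s.inf' hs fun i => ξ i ω) (Set.Iic x)) ∧
            (∀ (s : Finset (Fin n)) (hs : s.Nonempty), s.card = k - 1 →
              ∫⁻ ω, ENNReal.ofReal (g (s.inf' hs fun i => ξ i ω)) ∂μ = ⊤)) :=
  min_of_many_heavy_light_threshold_general F hF g hg_mono hg_tendsto n k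
end

section
/- Let F be any probability distribution on ℝ with right-unbounded support. Then there exist probability distributions H₁ and H₂ on ℝ such that, for independent random variables ξ₁ with distribution H₁ and ξ₂ with distribution H₂, the random variable min(ξ₁, ξ₂) has distribution F and E max(ξ₁, 0) = E max(ξ₂, 0) = ∞, i.e., each of ξ₁ and ξ₂ has infinite first moment. -/
/-!
Write the survival function of `F` as `exp (-Λ)`, where the cumulative hazard `Λ` is
nondecreasing, right-continuous, tends to `0` at `-∞` and to `∞` at `+∞`. Choose
`0 = s₀ ≤ s₁ ≤ ⋯` with `s (k + 1) ≥ s k + exp (Λ (s k))` and `Λ (s (k + 1)) ≥ Λ (s k) + 1`, and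
split `Λ = Λ₁ + Λ₂`: `Λ₁` increases like `Λ` on `(-∞, s₀]` and on the blocks `[s (2j), s (2j+1)]`
and is flat on the others, `Λ₂` the other way round. The laws `Hᵢ` with survival functions
`exp (-Λᵢ)` multiply to the survival function of `F`, which is the law of the minimum of
independent variables with laws `H₁` and `H₂`. On a block `[s k, s (k + 1)]` where `Λᵢ` is flat,
the survival function of `Hᵢ` is at least `exp (-Λ (s k))` over a length at least
`exp (Λ (s k))`, so each of the infinitely many such blocks contributes at least `1` to
`E max (ξᵢ, 0) = ∫₀^∞ Hᵢ (t, ∞) dt`.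
-/

open MeasureTheory ProbabilityTheory Filter Set Topology Real
open scoped ENNReal

theorem MeasureTheory.Measure.ext_of_Ioi {μ ν : Measure ℝ} [IsProbabilityMeasure μ]
    [IsProbabilityMeasure ν] (h : ∀ x, μ (Ioi x) = ν (Ioi x)) : μ = ν :=
  ext_of_Iic μ ν fun x => by
    rw [← compl_Ioi, prob_compl_eq_one_sub measurableSet_Ioi,
      prob_compl_eq_one_sub measurableSet_Ioi, h]

theorem ProbabilityTheory.IndepFun.map_min_Ioi {Ω : Type*} [MeasurableSpace Ω] {μ : Measure Ω}
    {ξ₁ ξ₂ : Ω → ℝ} (h : IndepFun ξ₁ ξ₂ μ) (h₁ : Measurable ξ₁) (h₂ : Measurable ξ₂) (x : ℝ) :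
    μ.map (fun ω => min (ξ₁ ω) (ξ₂ ω)) (Ioi x) = μ.map ξ₁ (Ioi x) * μ.map ξ₂ (Ioi x) := by
  have hpre : (fun ω => min (ξ₁ ω) (ξ₂ ω)) ⁻¹' Ioi x = ξ₁ ⁻¹' Ioi x ∩ ξ₂ ⁻¹' Ioi x := by
    ext ω; simp
  rw [Measure.map_apply (h₁.min h₂) measurableSet_Ioi, hpre,
    h.measure_inter_preimage_eq_mul _ _ measurableSet_Ioi measurableSet_Ioi,
    Measure.map_apply h₁ measurableSet_Ioi, Measure.map_apply h₂ measurableSet_Ioi]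

theorem lintegral_ofReal_max_eq_top {H : Measure ℝ} {s : ℕ → ℝ} (hs : Monotone s) (hs₀ : 0 ≤ s 0)
    {e : ℕ → ℕ} (he : Function.Injective e)
    (h : ∀ j, 1 ≤ ∫⁻ t in Ioc (s (e j)) (s (e j + 1)), H (Ioi t)) :
    ∫⁻ x, ENNReal.ofReal (max x 0) ∂H = ∞ := by
  have hlevel : ∀ t ∈ Ioi (0 : ℝ), H {x | t < max x 0} = H (Ioi t) := fun t (ht : 0 < t) => by
    congr 1; ext x; simp [not_lt.2 ht.le]
  rw [lintegral_eq_lintegral_meas_lt H (ae_of_all _ fun x => le_max_right x 0)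
    (measurable_id.max measurable_const).aemeasurable,
    setLIntegral_congr_fun measurableSet_Ioi hlevel, eq_top_iff]
  calc ∞ = ∑' _ : ℕ, (1 : ℝ≥0∞) := (ENNReal.tsum_const_eq_top_of_ne_zero one_ne_zero).symm
    _ ≤ ∑' j, ∫⁻ t in Ioc (s (e j)) (s (e j + 1)), H (Ioi t) := ENNReal.tsum_le_tsum h
    _ = ∫⁻ t in ⋃ j, Ioc (s (e j)) (s (e j + 1)), H (Ioi t) :=
      (lintegral_iUnion (fun _ => measurableSet_Ioc)
        (hs.pairwise_disjoint_on_Ioc_succ.comp_of_injective he) _).symm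
    _ ≤ ∫⁻ t in Ioi 0, H (Ioi t) := lintegral_mono_set <| iUnion_subset fun j =>
      Ioc_subset_Ioi_self.trans (Ioi_subset_Ioi (hs₀.trans (hs (Nat.zero_le _))))

theorem exists_seq_of_forall_eventually {α : Type*} {l : Filter α} [l.NeBot]
    {p : α → α → Prop} (h : ∀ a, ∀ᶠ b in l, p a b) (a₀ : α) :
    ∃ s : ℕ → α, s 0 = a₀ ∧ ∀ n, p (s n) (s (n + 1)) := by
  choose f hf using fun a => (h a).exists
  exact ⟨fun n => f^[n] a₀, rfl, fun n => by simpa only [Function.iterate_succ_apply'] using hf _⟩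

namespace StieltjesFunction

noncomputable section

variable (Λ : StieltjesFunction ℝ)

def cdfOfHazard : StieltjesFunction ℝ where
  toFun x := 1 - exp (-Λ x)
  mono' _ _ h := sub_le_sub_left (exp_le_exp.2 (neg_le_neg (Λ.mono h))) 1
  right_continuous' x := continuousWithinAt_const.sub
    (continuous_exp.continuousAt.comp_continuousWithinAt (Λ.right_continuous x).neg)

def stopAt (c : ℝ) : StieltjesFunction ℝ where
  toFun x := Λ (min x c)
  mono' _ _ h := Λ.mono (min_le_min_right c h)
  right_continuous' x := ContinuousWithinAt.comp (g := Λ) (f := fun y => min y c)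
    (Λ.right_continuous (min x c)) (continuous_id.min continuous_const).continuousWithinAt
    fun _ hy => min_le_min_right c hy

variable {Λ}

@[simp]
theorem cdfOfHazard_apply (x : ℝ) : Λ.cdfOfHazard x = 1 - exp (-Λ x) := rfl

@[simp]
theorem stopAt_apply (c x : ℝ) : Λ.stopAt c x = Λ (min x c) := rfl

theorem tendsto_cdfOfHazard_atTop (h : Tendsto Λ atTop atTop) :
    Tendsto Λ.cdfOfHazard atTop (𝓝 1) := by
  show Tendsto (fun x => 1 - exp (-Λ x)) atTop (𝓝 1)
  simpa using tendsto_const_nhds (x := (1 : ℝ)).sub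
    (tendsto_exp_atBot.comp (tendsto_neg_atTop_atBot.comp h))

theorem measure_cdfOfHazard_Ioi (h : Tendsto Λ atTop atTop) (x : ℝ) :
    Λ.cdfOfHazard.measure (Ioi x) = ENNReal.ofReal (exp (-Λ x)) := by
  simp [measure_Ioi _ (tendsto_cdfOfHazard_atTop h)]

theorem isProbabilityMeasure_cdfOfHazard (h₀ : Tendsto Λ atBot (𝓝 0))
    (h : Tendsto Λ atTop atTop) : IsProbabilityMeasure Λ.cdfOfHazard.measure := by
  have hexp := (continuous_exp.tendsto _).comp h₀.neg
  refine isProbabilityMeasure _ ?_ (tendsto_cdfOfHazard_atTop h)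
  show Tendsto (fun x => 1 - exp (-Λ x)) atBot (𝓝 0)
  simpa using tendsto_const_nhds (x := (1 : ℝ)).sub hexp

theorem one_le_setLIntegral_cdfOfHazard (h : Tendsto Λ atTop atTop) {a b : ℝ}
    (hab : a + exp (Λ b) ≤ b) : 1 ≤ ∫⁻ t in Ioc a b, Λ.cdfOfHazard.measure (Ioi t) :=
  calc 1 = ENNReal.ofReal (exp (-Λ b) * exp (Λ b)) := by rw [← exp_add]; simp
    _ ≤ ENNReal.ofReal (exp (-Λ b)) * ENNReal.ofReal (b - a) := by
      rw [← ENNReal.ofReal_mul (exp_nonneg _)]; gcongr; linarith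
    _ = ∫⁻ _ in Ioc a b, Λ.cdfOfHazard.measure (Ioi b) := by
      rw [setLIntegral_const, Real.volume_Ioc, measure_cdfOfHazard_Ioi h]
    _ ≤ ∫⁻ t in Ioc a b, Λ.cdfOfHazard.measure (Ioi t) :=
      setLIntegral_mono' measurableSet_Ioc fun t ht => measure_mono (Ioi_subset_Ioi ht.2)

def blockIncr (s : ℕ → ℝ) (k : ℕ) (x : ℝ) : ℝ := Λ.stopAt (s (k + 1)) x - Λ.stopAt (s k) x

/-- Increases like `Λ` on the blocks `[s k, s (k + 1)]` with `k ∈ P`, constant elsewhere. -/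
def blockPart (s : ℕ → ℝ) (P : Set ℕ) (x : ℝ) : ℝ :=
  ∑' k, P.indicator (fun k => Λ.blockIncr s k x) k

variable {s : ℕ → ℝ} {P : Set ℕ}

section Blocks

variable (hs : Monotone s)
include hs

theorem blockIncr_eq_zero {k : ℕ} {x : ℝ} (h : x ≤ s k) : Λ.blockIncr s k x = 0 := by
  simp [blockIncr, min_eq_left h, min_eq_left (h.trans (hs k.le_succ))]

theorem blockIncr_of_le {k : ℕ} {x : ℝ} (h : s (k + 1) ≤ x) :
    Λ.blockIncr s k x = Λ (s (k + 1)) - Λ (s k) := by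
  simp [blockIncr, min_eq_right h, min_eq_right ((hs k.le_succ).trans h)]

theorem blockIncr_nonneg (k : ℕ) (x : ℝ) : 0 ≤ Λ.blockIncr s k x :=
  sub_nonneg.2 (Λ.mono (min_le_min_left x (hs k.le_succ)))

theorem monotone_blockIncr (k : ℕ) : Monotone (Λ.blockIncr s k) := by
  intro a b hab
  rcases le_total a (s k) with ha | ha
  · rw [blockIncr_eq_zero hs ha]
    exact blockIncr_nonneg hs k b
  · simp only [blockIncr, stopAt_apply, min_eq_right ha, min_eq_right (ha.trans hab)]
    gcongr

theorem blockPart_eq_sum {x : ℝ} {n : ℕ} (h : x ≤ s n) :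
    Λ.blockPart s P x = ∑ k ∈ Finset.range n, P.indicator (fun k => Λ.blockIncr s k x) k :=
  tsum_eq_sum fun k hk => by
    rw [Finset.mem_range, not_lt] at hk
    simp [blockIncr_eq_zero hs (h.trans (hs hk))]

theorem blockPart_nonneg (x : ℝ) : 0 ≤ Λ.blockPart s P x :=
  tsum_nonneg fun _ => indicator_nonneg (fun k _ => blockIncr_nonneg hs k x) _

theorem blockPart_eq_zero {x : ℝ} (h : x ≤ s 0) : Λ.blockPart s P x = 0 := by
  simp [blockPart_eq_sum hs h]

theorem blockPart_seq (n : ℕ) : Λ.blockPart s P (s n) =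
    ∑ k ∈ Finset.range n, P.indicator (fun k => Λ (s (k + 1)) - Λ (s k)) k := by
  rw [blockPart_eq_sum hs le_rfl]
  refine Finset.sum_congr rfl fun k hk => ?_
  by_cases hkP : k ∈ P
  · simp [hkP, blockIncr_of_le hs (hs (Finset.mem_range.1 hk))]
  · simp [hkP]

theorem blockPart_seq_succ (k : ℕ) : Λ.blockPart s P (s (k + 1)) =
    Λ.blockPart s P (s k) + P.indicator (fun k => Λ (s (k + 1)) - Λ (s k)) k := by
  rw [blockPart_seq hs, blockPart_seq hs, Finset.sum_range_succ]

theorem blockPart_seq_succ_of_notMem {k : ℕ} (hk : k ∉ P) :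
    Λ.blockPart s P (s (k + 1)) = Λ.blockPart s P (s k) := by
  rw [blockPart_seq_succ hs, indicator_of_notMem hk, add_zero]

theorem tendsto_blockPart_atBot : Tendsto (Λ.blockPart s P) atBot (𝓝 0) :=
  tendsto_const_nhds.congr' <| (eventually_le_atBot (s 0)).mono fun _ hx =>
    (blockPart_eq_zero hs hx).symm

variable (hs' : Tendsto s atTop atTop)
include hs'

theorem blockPart_add_blockPart_compl (x : ℝ) :
    Λ.blockPart s P x + Λ.blockPart s Pᶜ x = Λ x - Λ (min x (s 0)) := by
  obtain ⟨n, hn⟩ := (hs'.eventually_ge_atTop x).exists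
  rw [blockPart_eq_sum hs hn, blockPart_eq_sum hs hn, ← Finset.sum_add_distrib]
  simp only [indicator_self_add_compl_apply, blockIncr]
  rw [Finset.sum_range_sub (fun k => Λ.stopAt (s k) x), stopAt_apply, stopAt_apply,
    min_eq_left hn]

theorem monotone_blockPart : Monotone (Λ.blockPart s P) := by
  intro a b hab
  obtain ⟨n, hn⟩ := (hs'.eventually_ge_atTop b).exists
  rw [blockPart_eq_sum hs (hab.trans hn), blockPart_eq_sum hs hn]
  exact Finset.sum_le_sum fun k _ => indicator_le_indicator (monotone_blockIncr hs k hab)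

theorem continuousWithinAt_blockPart (x : ℝ) :
    ContinuousWithinAt (Λ.blockPart s P) (Ici x) x := by
  obtain ⟨n, hn⟩ := (hs'.eventually_gt_atTop x).exists
  have hsum : Λ.blockPart s P =ᶠ[𝓝[≥] x]
      fun y => ∑ k ∈ Finset.range n, P.indicator (fun k => Λ.blockIncr s k y) k :=
    eventually_nhdsWithin_of_eventually_nhds <|
      (eventually_lt_nhds hn).mono fun y hy => blockPart_eq_sum hs (le_of_lt hy)
  refine ContinuousWithinAt.congr_of_eventuallyEq ?_ hsum (blockPart_eq_sum hs hn.le)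
  refine tendsto_finsetSum _ fun k _ => ?_
  by_cases hkP : k ∈ P
  · simp only [indicator_of_mem hkP]
    exact ((Λ.stopAt _).right_continuous x).sub ((Λ.stopAt _).right_continuous x)
  · simp only [indicator_of_notMem hkP]
    exact continuousWithinAt_const

theorem tendsto_blockPart_atTop (hgrow : ∀ k, Λ (s k) + 1 ≤ Λ (s (k + 1)))
    (hP : ∀ n, 2 * n ∈ P ∨ 2 * n + 1 ∈ P) : Tendsto (Λ.blockPart s P) atTop atTop := by
  have hincr : ∀ k, 0 ≤ P.indicator (fun k => Λ (s (k + 1)) - Λ (s k)) k := fun k =>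
    indicator_nonneg (fun k _ => by linarith [hgrow k]) k
  have hincr_mem : ∀ k ∈ P, 1 ≤ P.indicator (fun k => Λ (s (k + 1)) - Λ (s k)) k := fun k hk => by
    rw [indicator_of_mem hk]; linarith [hgrow k]
  have hlower : ∀ n : ℕ, (n : ℝ) ≤ Λ.blockPart s P (s (2 * n)) := by
    intro n
    induction n with
    | zero => simp [blockPart_eq_zero hs le_rfl]
    | succ n ih =>
      rw [show 2 * (n + 1) = 2 * n + 1 + 1 by ring, blockPart_seq_succ hs, blockPart_seq_succ hs]
      push_cast
      rcases hP n with h | h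
      · linarith [hincr_mem _ h, hincr (2 * n + 1)]
      · linarith [hincr_mem _ h, hincr (2 * n)]
  exact tendsto_atTop_atTop_of_monotone (monotone_blockPart hs hs') fun b =>
    ⟨s (2 * ⌈b⌉₊), (Nat.le_ceil b).trans (hlower _)⟩

variable (Λ) in
def blockPartStieltjes (P : Set ℕ) : StieltjesFunction ℝ where
  toFun := Λ.blockPart s P
  mono' := monotone_blockPart hs hs'
  right_continuous' := continuousWithinAt_blockPart hs hs'

@[simp]
theorem blockPartStieltjes_apply (x : ℝ) :
    Λ.blockPartStieltjes hs hs' P x = Λ.blockPart s P x := rfl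

end Blocks

theorem tendsto_stopAt_atBot (h₀ : Tendsto Λ atBot (𝓝 0)) (c : ℝ) :
    Tendsto (Λ.stopAt c) atBot (𝓝 0) :=
  h₀.congr' <| (eventually_le_atBot c).mono fun x hx => by simp [min_eq_left hx]

theorem lintegral_ofReal_max_cdfOfHazard_eq_top {Λ' : StieltjesFunction ℝ}
    (h' : Tendsto Λ' atTop atTop) (hs : Monotone s) (hs₀ : 0 ≤ s 0)
    (hgap : ∀ k, s k + exp (Λ (s k)) ≤ s (k + 1)) (hle : ∀ x, Λ' x ≤ Λ x) {e : ℕ → ℕ}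
    (he : Function.Injective e) (hflat : ∀ j, Λ' (s (e j + 1)) = Λ' (s (e j))) :
    ∫⁻ x, ENNReal.ofReal (max x 0) ∂Λ'.cdfOfHazard.measure = ∞ :=
  lintegral_ofReal_max_eq_top hs hs₀ he fun j => one_le_setLIntegral_cdfOfHazard h' <| by
    rw [hflat j]
    linarith [hgap (e j), exp_le_exp.2 (hle (s (e j)))]

theorem exists_seq_hazard_gaps (h₀ : Tendsto Λ atBot (𝓝 0)) (h : Tendsto Λ atTop atTop) :
    ∃ s : ℕ → ℝ, s 0 = 0 ∧ Monotone s ∧ Tendsto s atTop atTop ∧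
      (∀ k, s k + exp (Λ (s k)) ≤ s (k + 1)) ∧ ∀ k, Λ (s k) + 1 ≤ Λ (s (k + 1)) := by
  obtain ⟨s, hs₀, hstep⟩ := exists_seq_of_forall_eventually
    (p := fun a b => a + exp (Λ a) ≤ b ∧ Λ a + 1 ≤ Λ b)
    (fun a => (eventually_ge_atTop _).and (h.eventually_ge_atTop _)) 0
  have hgap : ∀ k, s k + 1 ≤ s (k + 1) := fun k => by
    linarith [(hstep k).1, one_le_exp (Λ.mono.le_of_tendsto h₀ (s k))]
  have hle : ∀ n : ℕ, (n : ℝ) ≤ s n := fun n => by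
    induction n with
    | zero => simp [hs₀]
    | succ n ih => push_cast; linarith [hgap n]
  exact ⟨s, hs₀, monotone_nat_of_le_succ fun k => by linarith [hgap k],
    tendsto_atTop_mono hle tendsto_natCast_atTop_atTop, fun k => (hstep k).1,
    fun k => (hstep k).2⟩

theorem exists_infiniteMean_survival_factors (h₀ : Tendsto Λ atBot (𝓝 0))
    (h : Tendsto Λ atTop atTop) :
    ∃ H₁ H₂ : Measure ℝ, IsProbabilityMeasure H₁ ∧ IsProbabilityMeasure H₂ ∧
      (∀ x, H₁ (Ioi x) * H₂ (Ioi x) = ENNReal.ofReal (exp (-Λ x))) ∧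
      ∫⁻ x, ENNReal.ofReal (max x 0) ∂H₁ = ∞ ∧ ∫⁻ x, ENNReal.ofReal (max x 0) ∂H₂ = ∞ := by
  obtain ⟨s, hs₀, hs, hs', hgap, hgrow⟩ := exists_seq_hazard_gaps h₀ h
  have hΛ₀ : ∀ x, 0 ≤ Λ x := Λ.mono.le_of_tendsto h₀
  set E := {k : ℕ | Even k}
  set Λ₁ := Λ.stopAt (s 0) + Λ.blockPartStieltjes hs hs' E
  set Λ₂ := Λ.blockPartStieltjes hs hs' Eᶜ
  have hsum : ∀ x, Λ₁ x + Λ₂ x = Λ x := fun x => by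
    simp [Λ₁, Λ₂, add_assoc, blockPart_add_blockPart_compl hs hs']
  have hΛ₁₀ : ∀ x, 0 ≤ Λ₁ x := fun x => add_nonneg (hΛ₀ _) (blockPart_nonneg hs x)
  have hΛ₂₀ : ∀ x, 0 ≤ Λ₂ x := blockPart_nonneg hs
  have h₁ : Tendsto Λ₁ atTop atTop :=
    tendsto_atTop_mono (fun x => le_add_of_nonneg_left (hΛ₀ _)) <|
      tendsto_blockPart_atTop hs hs' hgrow fun n => Or.inl (even_two_mul n)
  have h₂ : Tendsto Λ₂ atTop atTop :=
    tendsto_blockPart_atTop hs hs' hgrow fun n =>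
      Or.inr (Nat.not_even_two_mul_add_one n)
  have h₁₀ : Tendsto Λ₁ atBot (𝓝 0) := by
    rw [← add_zero (0 : ℝ)]
    exact (tendsto_stopAt_atBot h₀ (s 0)).add (tendsto_blockPart_atBot hs)
  have h₂₀ : Tendsto Λ₂ atBot (𝓝 0) := tendsto_blockPart_atBot hs
  refine ⟨Λ₁.cdfOfHazard.measure, Λ₂.cdfOfHazard.measure,
    isProbabilityMeasure_cdfOfHazard h₁₀ h₁, isProbabilityMeasure_cdfOfHazard h₂₀ h₂,
    fun x => ?_, ?_, ?_⟩
  · rw [measure_cdfOfHazard_Ioi h₁, measure_cdfOfHazard_Ioi h₂,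
      ← ENNReal.ofReal_mul (exp_nonneg _), ← exp_add, ← hsum, neg_add]
  · refine lintegral_ofReal_max_cdfOfHazard_eq_top h₁ hs hs₀.ge hgap
      (fun x => by linarith [hsum x, hΛ₂₀ x]) (e := fun j => 2 * j + 1)
      (fun _ _ hij => by simpa using hij) fun j => ?_
    have hj : 2 * j + 1 ∉ E := Nat.not_even_two_mul_add_one j
    simp [Λ₁, blockPart_seq_succ_of_notMem hs hj, min_eq_right (hs (Nat.zero_le _))]
  · refine lintegral_ofReal_max_cdfOfHazard_eq_top h₂ hs hs₀.ge hgap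
      (fun x => by linarith [hsum x, hΛ₁₀ x]) (e := fun j => 2 * j)
      (fun _ _ hij => by simpa using hij) fun j => ?_
    have hj : 2 * j ∉ Eᶜ := not_not.2 (even_two_mul j)
    simp [Λ₂, blockPart_seq_succ_of_notMem hs hj]

end

end StieltjesFunction

namespace ProbabilityTheory

noncomputable section

variable {μ : Measure ℝ} (hμ : ∀ x, cdf μ x < 1)

variable (μ) in
def cumulativeHazard : StieltjesFunction ℝ where
  toFun x := -log (1 - cdf μ x)
  mono' _ b h := neg_le_neg <|
    log_le_log (sub_pos.2 (hμ b)) (sub_le_sub_left (monotone_cdf μ h) 1)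
  right_continuous' x := ((continuousAt_log (sub_pos.2 (hμ x)).ne').comp_continuousWithinAt
    (f := fun y => 1 - cdf μ y)
    (continuousWithinAt_const.sub ((cdf μ).right_continuous x))).neg

@[simp]
theorem cumulativeHazard_apply (x : ℝ) : cumulativeHazard μ hμ x = -log (1 - cdf μ x) := rfl

theorem tendsto_cumulativeHazard_atBot : Tendsto (cumulativeHazard μ hμ) atBot (𝓝 0) := by
  have h : Tendsto (fun x => 1 - cdf μ x) atBot (𝓝 1) := by
    simpa using tendsto_const_nhds (x := (1 : ℝ)).sub (tendsto_cdf_atBot μ)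
  show Tendsto (fun x => -log (1 - cdf μ x)) atBot (𝓝 0)
  simpa using ((continuousAt_log one_ne_zero).tendsto.comp h).neg

theorem tendsto_cumulativeHazard_atTop : Tendsto (cumulativeHazard μ hμ) atTop atTop := by
  have h : Tendsto (fun x => 1 - cdf μ x) atTop (𝓝[>] 0) :=
    tendsto_nhdsWithin_iff.2
      ⟨by simpa using tendsto_const_nhds (x := (1 : ℝ)).sub (tendsto_cdf_atTop μ),
      Eventually.of_forall fun x => sub_pos.2 (hμ x)⟩
  exact tendsto_neg_atBot_atTop.comp (tendsto_log_nhdsGT_zero.comp h)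

theorem measure_Ioi_eq_exp_neg_cumulativeHazard [IsProbabilityMeasure μ] (x : ℝ) :
    μ (Ioi x) = ENNReal.ofReal (exp (-cumulativeHazard μ hμ x)) := by
  conv_lhs => rw [← measure_cdf μ]
  rw [(cdf μ).measure_Ioi (tendsto_cdf_atTop μ), cumulativeHazard_apply, neg_neg,
    exp_log (sub_pos.2 (hμ x))]

end

end ProbabilityTheory

/-- Any probability distribution `F` on `ℝ` with right-unbounded support
is the distribution of the minimum of two independent random variables each of which has
infinite first moment: `E max(ξᵢ, 0) = ∞`. -/
theorem min_of_two_with_infinite_first_moment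
    (F : Measure ℝ) [IsProbabilityMeasure F]
    (hF : ∀ x : ℝ, F (Set.Iic x) < 1) :
    ∃ H₁ H₂ : Measure ℝ, IsProbabilityMeasure H₁ ∧ IsProbabilityMeasure H₂ ∧
      ∀ (Ω : Type) (mΩ : MeasurableSpace Ω) (μ : Measure Ω), IsProbabilityMeasure μ →
        ∀ ξ₁ ξ₂ : Ω → ℝ, Measurable ξ₁ → Measurable ξ₂ →
          μ.map ξ₁ = H₁ → μ.map ξ₂ = H₂ → IndepFun ξ₁ ξ₂ μ →
          μ.map (fun ω => min (ξ₁ ω) (ξ₂ ω)) = F ∧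
          ∫⁻ ω, ENNReal.ofReal (max (ξ₁ ω) 0) ∂μ = ⊤ ∧
          ∫⁻ ω, ENNReal.ofReal (max (ξ₂ ω) 0) ∂μ = ⊤ := by
  have hcdf : ∀ x, cdf F x < 1 := fun x => by
    rw [← ENNReal.ofReal_lt_one, ofReal_cdf]; exact hF x
  obtain ⟨H₁, H₂, hH₁, hH₂, hmul, hm₁, hm₂⟩ :=
    (cumulativeHazard F hcdf).exists_infiniteMean_survival_factors
      (tendsto_cumulativeHazard_atBot hcdf) (tendsto_cumulativeHazard_atTop hcdf)
  refine ⟨H₁, H₂, hH₁, hH₂, fun Ω _ μ _ ξ₁ ξ₂ hξ₁ hξ₂ hlaw₁ hlaw₂ hind => ⟨?_, ?_, ?_⟩⟩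
  · have := Measure.isProbabilityMeasure_map (μ := μ) (hξ₁.min hξ₂).aemeasurable
    refine Measure.ext_of_Ioi fun x => ?_
    rw [hind.map_min_Ioi hξ₁ hξ₂, hlaw₁, hlaw₂, hmul,
      measure_Ioi_eq_exp_neg_cumulativeHazard hcdf]
  · rw [← hlaw₁, lintegral_map (by fun_prop) hξ₁] at hm₁
    exact hm₁
  · rw [← hlaw₂, lintegral_map (by fun_prop) hξ₂] at hm₂
    exact hm₂
end

section
/- Let α > β > 0 and set r = α/β. Define a_k = 2^{∑_{j=1}^k r^j} for k ≥ 1. Then for every k ≥ 1, a_{k+1} − a_k ≥ a_k^{α/β} ≥ 1. Consequently, for the exponential distribution with tail F̄(x) = e^{−αx} (x ≥ 0) and the function g(x) = e^{βx}, the sequence (a_k) satisfies the growth requirement a_{k+1} − a_k ≥ max(1, exp(R_F(g^{−1}(a_k)))), since exp(R_F(g^{−1}(a))) = a^{α/β}. -/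
open Finset

/-- **Example 2.1.** Let `α > β > 0`, `r = α/β`, and
`a_k = 2 ^ (∑_{j=1}^k r^j)`.  Then for every `k ≥ 1` one has
`a_{k+1} − a_k ≥ a_k ^ (α/β) ≥ 1`; consequently, since for the exponential tail
`F̄(x) = e^{−αx}` and `g(x) = e^{βx}` one has `exp (R_F (g⁻¹ a)) = a ^ (α/β)`
(i.e. `exp (α * (log a / β)) = a ^ (α/β)` for `a > 0`), the sequence satisfies the
growth requirement `a_{k+1} − a_k ≥ max 1 (exp (R_F (g⁻¹ (a_k))))`. -/
theorem exponential_example_interval_growth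
    (α β r : ℝ) (hβ : 0 < β) (hαβ : β < α) (hr : r = α / β)
    (a : ℕ → ℝ) (ha : ∀ k, a k = (2 : ℝ) ^ (∑ j ∈ Finset.Icc 1 k, r ^ j)) :
    (∀ x : ℝ, 0 < x → Real.exp (α * (Real.log x / β)) = x ^ (α / β)) ∧
      ∀ k : ℕ, 1 ≤ k →
        (1 ≤ a k ^ (α / β)) ∧
        (a k ^ (α / β) ≤ a (k + 1) - a k) ∧
        (max 1 (Real.exp (α * (Real.log (a k) / β))) ≤ a (k + 1) - a k) := by
  have hr1 : 1 < r := by rw [hr]; exact (one_lt_div hβ).mpr hαβ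
  have hr0 : (0 : ℝ) < r := lt_trans one_pos hr1
  set S : ℕ → ℝ := fun k => ∑ j ∈ Finset.Icc 1 k, r ^ j with hS
  have hSnn : ∀ k, 0 ≤ S k := fun k =>
    Finset.sum_nonneg fun j _ => pow_nonneg hr0.le j
  have hsucc : ∀ k : ℕ, S (k + 1) = S k + r ^ (k + 1) := by
    intro k
    simp [hS, Finset.sum_Icc_succ_top (Nat.le_add_left 1 k)]
  have hgeom : ∀ k : ℕ, S k * (r - 1) = r ^ (k + 1) - r := by
    intro k
    induction k with
    | zero => simp [hS]
    | succ n ih =>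
      rw [hsucc n]
      linear_combination ih
  -- first part
  have h1 : ∀ x : ℝ, 0 < x → Real.exp (α * (Real.log x / β)) = x ^ (α / β) := by
    intro x hx
    rw [Real.rpow_def_of_pos hx]
    congr 1
    ring
  refine ⟨h1, fun k hk => ?_⟩
  have h2 : (0 : ℝ) ≤ 2 := by norm_num
  have hlt2 : (1 : ℝ) < 2 := one_lt_two
  have hak : a k = (2 : ℝ) ^ S k := ha k
  have hak1 : a (k + 1) = (2 : ℝ) ^ S (k + 1) := ha (k + 1)
  have hakpos : 0 < a k := by rw [hak]; exact Real.rpow_pos_of_pos two_pos _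
  have hkey : a k ^ (α / β) = (2 : ℝ) ^ (S k * r) := by
    rw [hak, ← Real.rpow_mul h2, hr]
  have hSr : S k * r = S (k + 1) - r := by
    have := hgeom k
    have := hsucc k
    nlinarith [hgeom k, hsucc k]
  have hrpow : r ≤ r ^ (k + 1) := by
    calc r = r ^ 1 := (pow_one r).symm
    _ ≤ r ^ (k + 1) := pow_le_pow_right₀ hr1.le (Nat.le_add_left 1 k)
  -- 1 ≤ a k ^ (α/β)
  have hone : 1 ≤ a k ^ (α / β) := by
    rw [hkey]
    have : (2 : ℝ) ^ (0 : ℝ) ≤ (2 : ℝ) ^ (S k * r) := by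
      rw [Real.rpow_le_rpow_left_iff hlt2]
      exact mul_nonneg (hSnn k) hr0.le
    simpa using this
  -- main inequality
  have hmain : a k ^ (α / β) ≤ a (k + 1) - a k := by
    rw [hkey, hak, hak1]
    have e1 : (2 : ℝ) ^ (S k * r) ≤ (2 : ℝ) ^ (S (k + 1) - 1) := by
      rw [Real.rpow_le_rpow_left_iff hlt2, hSr]
      linarith
    have e2 : (2 : ℝ) ^ (S k) ≤ (2 : ℝ) ^ (S (k + 1) - 1) := by
      rw [Real.rpow_le_rpow_left_iff hlt2]
      have := hsucc k
      linarith
    have e3 : (2 : ℝ) ^ (S (k + 1) - 1) = (2 : ℝ) ^ (S (k + 1)) / 2 := by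
      rw [Real.rpow_sub two_pos, Real.rpow_one]
    linarith
  refine ⟨hone, hmain, ?_⟩
  rw [h1 (a k) hakpos]
  exact le_trans (max_le hone le_rfl) hmain
end

section
/- Let α, β > 0 with β + 1 < α, set r = α/β, and define a_k = 2^{∑_{j=1}^k r^j} for k ≥ 1. Then a_{k+1} − a_k ≥ 1 for all k ≥ 1, and there exists K such that for all k ≥ K, a_{k+1} − a_k ≥ (1 + a_k^{1/β})^α. Consequently, for the distribution with tail F̄(x) = (1+x)^{−α} (x ≥ 0) and the function g(x) = x^β, the sequence (a_k) eventually satisfies the growth requirement a_{k+1} − a_k ≥ exp(R_F(g^{−1}(a_k))), since exp(R_F(g^{−1}(a))) = (1 + a^{1/β})^α. -/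
open Finset

private lemma two_rpow_ge {C t : ℝ} (hC : 0 < C) (ht : Real.logb 2 C ≤ t) :
    C ≤ (2 : ℝ) ^ t := by
  calc C = (2 : ℝ) ^ Real.logb 2 C := (Real.rpow_logb two_pos (by norm_num) hC).symm
    _ ≤ (2 : ℝ) ^ t := (Real.rpow_le_rpow_left_iff one_lt_two).mpr ht

/-- **Example 2.2.** Let `α, β > 0` with `β + 1 < α`, `r = α/β`, and
`a_k = 2 ^ (∑_{j=1}^k r^j)`.  Then `a_{k+1} − a_k ≥ 1` for all `k ≥ 1`, and eventually
`a_{k+1} − a_k ≥ (1 + a_k^{1/β})^α`; consequently, since for the tail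
`F̄(x) = (1+x)^{−α}` and `g(x) = x^β` one has
`exp (R_F (g⁻¹ a)) = (1 + a^{1/β})^α` (i.e. `exp (α * log (1 + a^{1/β})) = (1 + a^{1/β})^α`
for `a > 0`), the sequence eventually satisfies the growth requirement
`a_{k+1} − a_k ≥ exp (R_F (g⁻¹ (a_k)))`. -/
theorem polynomial_example_interval_growth
    (α β r : ℝ) (hβ : 0 < β) (hα : β + 1 < α) (hr : r = α / β)
    (a : ℕ → ℝ) (ha : ∀ k, a k = (2 : ℝ) ^ (∑ j ∈ Finset.Icc 1 k, r ^ j)) :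
    (∀ x : ℝ, 0 < x →
        Real.exp (α * Real.log (1 + x ^ (1 / β))) = (1 + x ^ (1 / β)) ^ α) ∧
      (∀ k : ℕ, 1 ≤ k → 1 ≤ a (k + 1) - a k) ∧
      ∃ K : ℕ, ∀ k : ℕ, K ≤ k →
        (1 + a k ^ (1 / β)) ^ α ≤ a (k + 1) - a k := by
  have hα0 : 0 < α := by nlinarith
  have hr1 : (1 : ℝ) < r := by
    rw [hr, lt_div_iff₀ hβ]; linarith
  have hr0 : (0 : ℝ) < r := by linarith
  set s : ℕ → ℝ := fun k => ∑ j ∈ Finset.Icc 1 k, r ^ j with hs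
  have hstep : ∀ k : ℕ, s (k + 1) = s k + r ^ (k + 1) := by
    intro k
    simpa [hs] using Finset.sum_Icc_succ_top (Nat.one_le_iff_ne_zero.mpr (Nat.succ_ne_zero k)) _
  have hpow1 : ∀ k : ℕ, (1 : ℝ) ≤ r ^ k := fun k => one_le_pow₀ hr1.le
  have hsge : ∀ k : ℕ, (k : ℝ) ≤ s k := by
    intro k
    have : ∀ j ∈ Finset.Icc 1 k, (1 : ℝ) ≤ r ^ j := fun j _ => hpow1 j
    calc (k : ℝ) = ∑ _j ∈ Finset.Icc 1 k, (1 : ℝ) := by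
            simp [Nat.Icc_eq_range', Finset.sum_const]
      _ ≤ s k := Finset.sum_le_sum this
  have hsnn : ∀ k : ℕ, 0 ≤ s k := fun k => le_trans (by positivity) (hsge k)
  have hgeom : ∀ k : ℕ, (r - 1) * s k = r ^ (k + 1) - r := by
    intro k
    induction k with
    | zero => simp [hs]
    | succ n ih =>
        rw [hstep n]
        ring_nf
        ring_nf at ih
        nlinarith [ih]
  have hdiff : ∀ k : ℕ, a (k + 1) - a k = (2 : ℝ) ^ s k * ((2 : ℝ) ^ (r ^ (k + 1)) - 1) := by
    intro k
    rw [ha, ha]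
    show (2 : ℝ) ^ s (k + 1) - (2 : ℝ) ^ s k = _
    rw [hstep k, Real.rpow_add two_pos]
    ring
  have ha' : ∀ k : ℕ, a k = (2 : ℝ) ^ s k := ha
  clear hs
  clear_value s
  refine ⟨?_, ?_, ?_⟩
  · -- Part 1
    intro x hx
    have h1 : 0 < 1 + x ^ (1 / β) := by positivity
    rw [Real.rpow_def_of_pos h1, mul_comm]
  · -- Part 2
    intro k hk
    rw [hdiff k]
    have h1 : (2 : ℝ) ≤ (2 : ℝ) ^ s k := by
      have : (1 : ℝ) ≤ s k := le_trans (by exact_mod_cast hk) (hsge k)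
      calc (2 : ℝ) = (2 : ℝ) ^ (1 : ℝ) := (Real.rpow_one 2).symm
        _ ≤ (2 : ℝ) ^ s k := (Real.rpow_le_rpow_left_iff one_lt_two).mpr this
    have h2 : (2 : ℝ) ≤ (2 : ℝ) ^ (r ^ (k + 1)) := by
      calc (2 : ℝ) = (2 : ℝ) ^ (1 : ℝ) := (Real.rpow_one 2).symm
        _ ≤ (2 : ℝ) ^ (r ^ (k + 1)) := (Real.rpow_le_rpow_left_iff one_lt_two).mpr (hpow1 (k + 1))
    nlinarith
  · -- Part 3
    set δ : ℝ := r / (2 * α) with hδ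
    have hδ0 : 0 < δ := by positivity
    have h2δ : (1 : ℝ) < (2 : ℝ) ^ δ := Real.one_lt_rpow_iff_of_pos two_pos |>.mpr (Or.inl ⟨one_lt_two, hδ0⟩)
    set ε : ℝ := r / 4 with hε
    have hε0 : 0 < ε := by positivity
    have h2ε : (2 : ℝ) ^ (-ε) < 1 := by
      rw [Real.rpow_lt_one_iff_of_pos two_pos]
      exact Or.inl ⟨one_lt_two, by linarith⟩
    have h2εpos : (0 : ℝ) < (2 : ℝ) ^ (-ε) := Real.rpow_pos_of_pos two_pos _
    set C₁ : ℝ := 1 / ((2 : ℝ) ^ δ - 1) with hC₁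
    have hC₁0 : 0 < C₁ := by rw [hC₁]; exact div_pos one_pos (by linarith)
    set C₂ : ℝ := 1 / (1 - (2 : ℝ) ^ (-ε)) with hC₂
    have hC₂0 : 0 < C₂ := by rw [hC₂]; exact div_pos one_pos (by linarith)
    obtain ⟨K, hK⟩ := exists_nat_ge (max (β * Real.logb 2 C₁) (Real.logb 2 C₂ / (r - 1)))
    refine ⟨K, fun k hk => ?_⟩
    have hkK : (K : ℝ) ≤ (k : ℝ) := by exact_mod_cast hk
    -- (A): C₁ ≤ 2 ^ (s k / β)
    have hA : C₁ ≤ (2 : ℝ) ^ (s k / β) := by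
      apply two_rpow_ge hC₁0
      have h1 : β * Real.logb 2 C₁ ≤ (k : ℝ) :=
        le_trans (le_trans (le_max_left _ _) hK) hkK
      rw [le_div_iff₀ hβ]
      calc Real.logb 2 C₁ * β = β * Real.logb 2 C₁ := by ring
        _ ≤ (k : ℝ) := h1
        _ ≤ s k := hsge k
    -- (B): C₂ ≤ 2 ^ (r ^ (k+1))
    have hB : C₂ ≤ (2 : ℝ) ^ (r ^ (k + 1)) := by
      apply two_rpow_ge hC₂0
      have h1 : Real.logb 2 C₂ / (r - 1) ≤ (k : ℝ) :=
        le_trans (le_trans (le_max_right _ _) hK) hkK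
      have h2 : Real.logb 2 C₂ ≤ (k : ℝ) * (r - 1) := by
        rw [div_le_iff₀ (by linarith)] at h1; linarith [h1]
      have hbern : 1 + ((k + 1 : ℕ) : ℝ) * (r - 1) ≤ (1 + (r - 1)) ^ (k + 1) :=
        one_add_mul_le_pow (by linarith) (k + 1)
      have h3 : (k : ℝ) * (r - 1) ≤ r ^ (k + 1) := by
        have hcast : ((k + 1 : ℕ) : ℝ) = (k : ℝ) + 1 := by push_cast; ring
        rw [hcast] at hbern
        have : (1 : ℝ) + (r - 1) = r := by ring
        rw [this] at hbern
        nlinarith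
      linarith
    -- Now the main computation
    have hak : a k = (2 : ℝ) ^ s k := ha' k
    have hak1β : a k ^ (1 / β) = (2 : ℝ) ^ (s k / β) := by
      rw [hak, ← Real.rpow_mul two_pos.le]
      ring_nf
    have haknn : (0 : ℝ) ≤ a k ^ (1 / β) := by rw [hak1β]; positivity
    -- LHS bound
    have hL1 : 1 + a k ^ (1 / β) ≤ (2 : ℝ) ^ δ * a k ^ (1 / β) := by
      have : (1 : ℝ) ≤ ((2 : ℝ) ^ δ - 1) * a k ^ (1 / β) := by
        rw [hak1β]
        calc (1 : ℝ) = ((2 : ℝ) ^ δ - 1) * C₁ := by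
              rw [hC₁, mul_one_div, div_self (ne_of_gt (by linarith : (0:ℝ) < (2:ℝ) ^ δ - 1))]
          _ ≤ ((2 : ℝ) ^ δ - 1) * (2 : ℝ) ^ (s k / β) :=
              mul_le_mul_of_nonneg_left hA (by linarith)
      nlinarith
    have hL2 : (1 + a k ^ (1 / β)) ^ α ≤ (2 : ℝ) ^ (r / 2 + s k * r) := by
      have h0 : (0 : ℝ) ≤ 1 + a k ^ (1 / β) := by linarith [haknn]
      have h1 : (1 + a k ^ (1 / β)) ^ α ≤ ((2 : ℝ) ^ δ * a k ^ (1 / β)) ^ α :=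
        Real.rpow_le_rpow h0 hL1 hα0.le
      have h2 : ((2 : ℝ) ^ δ * a k ^ (1 / β)) ^ α = (2 : ℝ) ^ (r / 2 + s k * r) := by
        rw [hak1β, ← Real.rpow_add two_pos, ← Real.rpow_mul two_pos.le]
        congr 1
        rw [hδ, hr]
        field_simp
      rw [← h2]; exact h1
    -- RHS bound
    have hR : (2 : ℝ) ^ (s k + r ^ (k + 1) - ε) ≤ a (k + 1) - a k := by
      rw [hdiff k]
      have h1 : (2 : ℝ) ^ (r ^ (k + 1) - ε) ≤ (2 : ℝ) ^ (r ^ (k + 1)) - 1 := by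
        have heq : (2 : ℝ) ^ (r ^ (k + 1) - ε) = (2 : ℝ) ^ (r ^ (k + 1)) * (2 : ℝ) ^ (-ε) := by
          rw [sub_eq_add_neg, Real.rpow_add two_pos]
        rw [heq]
        have : (1 : ℝ) ≤ (2 : ℝ) ^ (r ^ (k + 1)) * (1 - (2 : ℝ) ^ (-ε)) := by
          calc (1 : ℝ) = C₂ * (1 - (2 : ℝ) ^ (-ε)) := by
                rw [hC₂, one_div_mul_eq_div, div_self (ne_of_gt (by linarith : (0:ℝ) < 1 - (2:ℝ) ^ (-ε)))]
            _ ≤ (2 : ℝ) ^ (r ^ (k + 1)) * (1 - (2 : ℝ) ^ (-ε)) :=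
                mul_le_mul_of_nonneg_right hB (by linarith)
        have hexpand : (2 : ℝ) ^ (r ^ (k + 1)) * (1 - (2 : ℝ) ^ (-ε))
            = (2 : ℝ) ^ (r ^ (k + 1)) - (2 : ℝ) ^ (r ^ (k + 1)) * (2 : ℝ) ^ (-ε) := by ring
        rw [hexpand] at this
        linarith
      have h2 : (2 : ℝ) ^ (s k + r ^ (k + 1) - ε)
          = (2 : ℝ) ^ s k * (2 : ℝ) ^ (r ^ (k + 1) - ε) := by
        rw [add_sub_assoc, Real.rpow_add two_pos]
      rw [h2]
      exact mul_le_mul_of_nonneg_left h1 (Real.rpow_pos_of_pos two_pos _).le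
    -- chain
    have hexp : r / 2 + s k * r ≤ s k + r ^ (k + 1) - ε := by
      have hg2 : s k * r = s k + r ^ (k + 1) - r := by linear_combination hgeom k
      rw [hε]
      linarith [hg2]
    have hmid : (2 : ℝ) ^ (r / 2 + s k * r) ≤ (2 : ℝ) ^ (s k + r ^ (k + 1) - ε) :=
      (Real.rpow_le_rpow_left_iff one_lt_two).mpr hexp
    linarith [hL2, hmid, hR]
end

section
/- Let 0 < β < α < 1 and set r = α/β. Define a_k = exp(exp(∑_{j=1}^k r^j)) for k ≥ 1. Then for every k ≥ 1, a_{k+1} − a_k ≥ exp((log a_k)^{α/β}) ≥ 1. Consequently, for the Weibull-type (subexponential) distribution with tail F̄(x) = e^{−x^α} (x ≥ 0) and the function g(x) = e^{x^β}, the sequence (a_k) satisfies the growth requirement a_{k+1} − a_k ≥ max(1, exp(R_F(g^{−1}(a_k)))), since exp(R_F(g^{−1}(a))) = exp((log a)^{α/β}). -/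
open Finset

/-- **Example 2.3.** Let `0 < β < α < 1`, `r = α/β`, and
`a_k = exp (exp (∑_{j=1}^k r^j))`.  Then for every `k ≥ 1` one has
`a_{k+1} − a_k ≥ exp ((log a_k) ^ (α/β)) ≥ 1`; consequently, since for the
Weibull-type tail `F̄(x) = e^{−x^α}` and `g(x) = e^{x^β}` one has
`exp (R_F (g⁻¹ a)) = exp ((log a) ^ (α/β))`, the sequence satisfies the growth
requirement `a_{k+1} − a_k ≥ max 1 (exp (R_F (g⁻¹ (a_k))))`. -/
theorem weibull_example_interval_growth
    (α β r : ℝ) (hβ : 0 < β) (hβα : β < α) (hα : α < 1) (hr : r = α / β)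
    (a : ℕ → ℝ)
    (ha : ∀ k, a k = Real.exp (Real.exp (∑ j ∈ Finset.Icc 1 k, r ^ j))) :
    ∀ k : ℕ, 1 ≤ k →
      (1 ≤ Real.exp ((Real.log (a k)) ^ (α / β))) ∧
      (Real.exp ((Real.log (a k)) ^ (α / β)) ≤ a (k + 1) - a k) ∧
      (max 1 (Real.exp ((Real.log (a k)) ^ (α / β))) ≤ a (k + 1) - a k) := by
  intro k hk
  have hr1 : 1 < r := by rw [hr]; exact (one_lt_div hβ).mpr hβα
  have hr0 : 0 < r := lt_trans one_pos hr1
  set s := ∑ j ∈ Finset.Icc 1 k, r ^ j with hs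
  set t := ∑ j ∈ Finset.Icc 1 (k + 1), r ^ j with ht
  have hts : t = s + r ^ (k + 1) := by
    rw [ht, hs, Finset.sum_Icc_succ_top (by omega : 1 ≤ k + 1)]
  have key : ∀ n : ℕ, r * (∑ j ∈ Finset.Icc 1 n, r ^ j)
      = (∑ j ∈ Finset.Icc 1 (n + 1), r ^ j) - r := by
    intro n
    induction n with
    | zero => simp
    | succ m ih =>
      rw [Finset.sum_Icc_succ_top (by omega : 1 ≤ m + 1), mul_add, ih,
          Finset.sum_Icc_succ_top (by omega : 1 ≤ m + 2)]
      ring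
  have hrs : r * s = t - r := key k
  have hsge : r ≤ s := by
    have := Finset.single_le_sum (f := fun j => r ^ j)
      (fun i _ => (pow_pos hr0 i).le) (Finset.mem_Icc.mpr ⟨le_refl 1, hk⟩)
    simpa using this
  have hpow1 : (1 : ℝ) ≤ r ^ (k + 1) := one_le_pow₀ hr1.le
  have hpow2 : r ^ 2 ≤ r ^ (k + 1) := pow_le_pow_right₀ hr1.le (by omega)
  have ht2 : 2 ≤ t := by nlinarith [sq_nonneg (r - 1)]
  have hsr' : s * r ≤ t - 1 := by rw [mul_comm]; linarith
  have hst' : s ≤ t - 1 := by linarith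
  have he : (2 : ℝ) ≤ Real.exp 1 := by nlinarith [Real.add_one_le_exp (1 : ℝ)]
  have he2 : (2 : ℝ) ≤ Real.exp 2 := le_trans he (Real.exp_le_exp.mpr one_le_two)
  have hD2 : (2 : ℝ) ≤ Real.exp (t - 1) :=
    le_trans he (Real.exp_le_exp.mpr (by linarith))
  have hDt : Real.exp t = Real.exp 1 * Real.exp (t - 1) := by
    rw [← Real.exp_add]; ring_nf
  have step : Real.exp (t - 1) + 2 ≤ Real.exp t := by
    nlinarith [Real.exp_pos (t - 1)]
  have big : 2 * Real.exp (Real.exp (t - 1)) ≤ Real.exp (Real.exp t) := by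
    calc 2 * Real.exp (Real.exp (t - 1))
        ≤ Real.exp 2 * Real.exp (Real.exp (t - 1)) := by
          nlinarith [Real.exp_pos (Real.exp (t - 1))]
      _ = Real.exp (2 + Real.exp (t - 1)) := (Real.exp_add _ _).symm
      _ ≤ Real.exp (Real.exp t) := Real.exp_le_exp.mpr (by linarith)
  have hlog : Real.log (a k) = Real.exp s := by rw [ha k, Real.log_exp]
  have hrpow : (Real.log (a k)) ^ (α / β) = Real.exp (s * r) := by
    rw [hlog, ← hr, Real.rpow_def_of_pos (Real.exp_pos s), Real.log_exp]
  have h1 : Real.exp (Real.exp (s * r)) ≤ Real.exp (Real.exp (t - 1)) :=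
    Real.exp_le_exp.mpr (Real.exp_le_exp.mpr hsr')
  have h2 : Real.exp (Real.exp s) ≤ Real.exp (Real.exp (t - 1)) :=
    Real.exp_le_exp.mpr (Real.exp_le_exp.mpr hst')
  have hone : 1 ≤ Real.exp ((Real.log (a k)) ^ (α / β)) := by
    rw [hrpow]; exact Real.one_le_exp (Real.exp_pos _).le
  have hmain : Real.exp ((Real.log (a k)) ^ (α / β)) ≤ a (k + 1) - a k := by
    rw [hrpow, ha (k + 1), ha k, ← ht, ← hs]
    linarith
  exact ⟨hone, hmain, max_le (le_trans hone hmain) hmain⟩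
end
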